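/- arXiv:1907.05079 — 8 statements merged into one kernel-verified Lean document; each statement's English description precedes it below -/
import Mathlib

section
/- Let M be a finite MDP and π₁, π₂ two policies on M. Then the value-function difference satisfies V^{π₁}_M - V^{π₂}_M = d_M^{π₂} · (π₁ - π₂) · Q^{π₁}_M, i.e., for every state x: V^{π₁}_M(x) - V^{π₂}_M(x) = Σ_{x'} d_M^{π₂}(x'|x) Σ_a (π₁(a|x') - π₂(a|x')) Q^{π₁}_M(x',a). Symmetrically, V^{π₁}_M(x) - V^{π₂}_M(x) = Σ_{x'} d_M^{π₁}(x'|x) Σ_a (π₁(a|x') - π₂(a|x')) Q^{π₂}_M(x',a). -/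
open Matrix

private lemma stoch_det_ne_zero {X : Type*} [Fintype X] [DecidableEq X]
    (K : Matrix X X ℝ) (hKnn : ∀ x x', 0 ≤ K x x') (hKsum : ∀ x, ∑ x', K x x' = 1)
    (γ : ℝ) (hγ0 : 0 ≤ γ) (hγ1 : γ < 1) :
    ((1 : Matrix X X ℝ) - γ • K).det ≠ 0 := by
  intro h
  obtain ⟨v, hv, hmul⟩ := (Matrix.exists_mulVec_eq_zero_iff).2 h
  have hveq : ∀ x, v x = γ * ∑ x', K x x' * v x' := by
    intro x
    have h0 : (((1 : Matrix X X ℝ) - γ • K).mulVec v) x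
        = v x - γ * ∑ x', K x x' * v x' := by
      rw [Matrix.sub_mulVec, Matrix.smul_mulVec]
      simp [Matrix.one_mulVec, Matrix.mulVec, dotProduct, Finset.mul_sum]
    have h1 : (((1 : Matrix X X ℝ) - γ • K).mulVec v) x = 0 := by rw [hmul]; rfl
    rw [h0] at h1
    linarith
  obtain ⟨x₀, hx₀⟩ := Function.ne_iff.1 hv
  have hne : (Finset.univ : Finset X).Nonempty := ⟨x₀, Finset.mem_univ _⟩
  obtain ⟨x, -, hx⟩ := Finset.exists_max_image Finset.univ (fun x => |v x|) hne
  have hpos : 0 < |v x| := lt_of_lt_of_le (abs_pos.2 hx₀) (hx x₀ (Finset.mem_univ _))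
  have hle : |v x| ≤ γ * |v x| := by
    calc |v x| = γ * |∑ x', K x x' * v x'| := by
          rw [hveq x, abs_mul, abs_of_nonneg hγ0]
      _ ≤ γ * ∑ x', K x x' * |v x| := by
          apply mul_le_mul_of_nonneg_left _ hγ0
          calc |∑ x', K x x' * v x'| ≤ ∑ x', |K x x' * v x'| := Finset.abs_sum_le_sum_abs _ _
            _ ≤ ∑ x', K x x' * |v x| := by
                apply Finset.sum_le_sum
                intro i _
                rw [abs_mul, abs_of_nonneg (hKnn x i)]
                exact mul_le_mul_of_nonneg_left (hx i (Finset.mem_univ _)) (hKnn x i)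
      _ = γ * |v x| := by rw [← Finset.sum_mul, hKsum, one_mul]
  nlinarith

private lemma solve_lin {X : Type*} [Fintype X] [DecidableEq X]
    (K : Matrix X X ℝ) (hKnn : ∀ x x', 0 ≤ K x x') (hKsum : ∀ x, ∑ x', K x x' = 1)
    (γ : ℝ) (hγ0 : 0 ≤ γ) (hγ1 : γ < 1) (w g : X → ℝ)
    (h : ∀ x, w x - γ * ∑ x', K x x' * w x' = g x) :
    ∀ x, w x = ∑ x', ((1 : Matrix X X ℝ) - γ • K)⁻¹ x x' * g x' := by
  set B := (1 : Matrix X X ℝ) - γ • K with hB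
  have hdet : IsUnit B.det :=
    isUnit_iff_ne_zero.2 (stoch_det_ne_zero K hKnn hKsum γ hγ0 hγ1)
  have hBw : B.mulVec w = g := by
    funext x
    have h0 : (B.mulVec w) x = w x - γ * ∑ x', K x x' * w x' := by
      rw [hB, Matrix.sub_mulVec, Matrix.smul_mulVec]
      simp [Matrix.one_mulVec, Matrix.mulVec, dotProduct, Finset.mul_sum]
    rw [h0, h x]
  have : B⁻¹.mulVec (B.mulVec w) = w := by
    rw [Matrix.mulVec_mulVec, Matrix.nonsing_inv_mul B hdet, Matrix.one_mulVec]
  intro x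
  conv_lhs => rw [← this]
  rw [hBw]
  rfl

/-- Value difference decomposition for two policies in the same finite MDP:
`V^{π₁} - V^{π₂} = d^{π₂} (π₁ - π₂) Q^{π₁} = d^{π₁} (π₁ - π₂) Q^{π₂}`. -/
theorem spibb_value_difference_decomposition
    {X A : Type*} [Fintype X] [Fintype A] [DecidableEq X]
    (P : X → A → X → ℝ) (R : X → A → ℝ) (γ : ℝ)
    (hγ0 : 0 ≤ γ) (hγ1 : γ < 1)
    (hPnn : ∀ x a x', 0 ≤ P x a x') (hPsum : ∀ x a, ∑ x', P x a x' = 1)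
    (π₁ π₂ : X → A → ℝ)
    (hπ₁nn : ∀ x a, 0 ≤ π₁ x a) (hπ₁sum : ∀ x, ∑ a, π₁ x a = 1)
    (hπ₂nn : ∀ x a, 0 ≤ π₂ x a) (hπ₂sum : ∀ x, ∑ a, π₂ x a = 1)
    (Q₁ Q₂ : X → A → ℝ) (V₁ V₂ : X → ℝ)
    (hV₁ : ∀ x, V₁ x = ∑ a, π₁ x a * Q₁ x a)
    (hQ₁ : ∀ x a, Q₁ x a = R x a + γ * ∑ x', P x a x' * V₁ x')
    (hV₂ : ∀ x, V₂ x = ∑ a, π₂ x a * Q₂ x a)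
    (hQ₂ : ∀ x a, Q₂ x a = R x a + γ * ∑ x', P x a x' * V₂ x')
    (d₁ d₂ : Matrix X X ℝ)
    (hd₁ : d₁ = (1 - γ • (Matrix.of fun x x' => ∑ a, π₁ x a * P x a x'))⁻¹)
    (hd₂ : d₂ = (1 - γ • (Matrix.of fun x x' => ∑ a, π₂ x a * P x a x'))⁻¹) :
    (∀ x, V₁ x - V₂ x = ∑ x', d₂ x x' * ∑ a, (π₁ x' a - π₂ x' a) * Q₁ x' a) ∧
    (∀ x, V₁ x - V₂ x = ∑ x', d₁ x x' * ∑ a, (π₁ x' a - π₂ x' a) * Q₂ x' a) := by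
  -- difference of Q-values
  have hQdiff : ∀ x a, Q₁ x a - Q₂ x a = γ * ∑ x', P x a x' * (V₁ x' - V₂ x') := by
    intro x a
    have hs : ∑ x', P x a x' * (V₁ x' - V₂ x')
        = (∑ x', P x a x' * V₁ x') - ∑ x', P x a x' * V₂ x' := by
      rw [← Finset.sum_sub_distrib]
      exact Finset.sum_congr rfl fun i _ => by ring
    rw [hQ₁, hQ₂, hs]
    ring
  -- stochasticity of combined kernels
  have hK : ∀ (π : X → A → ℝ), (∀ x a, 0 ≤ π x a) → (∀ x, ∑ a, π x a = 1) →
      (∀ x x', 0 ≤ (Matrix.of fun x x' => ∑ a, π x a * P x a x') x x') ∧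
      (∀ x, ∑ x', (Matrix.of fun x x' => ∑ a, π x a * P x a x') x x' = 1) := by
    intro π hnn hsum
    constructor
    · intro x x'
      exact Finset.sum_nonneg fun a _ => mul_nonneg (hnn x a) (hPnn x a x')
    · intro x
      simp only [Matrix.of_apply]
      rw [Finset.sum_comm]
      calc (∑ a, ∑ x', π x a * P x a x') = ∑ a, π x a * ∑ x', P x a x' := by
            refine Finset.sum_congr rfl fun a _ => ?_; rw [Finset.mul_sum]
        _ = 1 := by simp [hPsum, hsum]
  obtain ⟨hK₁nn, hK₁sum⟩ := hK π₁ hπ₁nn hπ₁sum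
  obtain ⟨hK₂nn, hK₂sum⟩ := hK π₂ hπ₂nn hπ₂sum
  -- generic sum manipulation
  have hswap : ∀ (π : X → A → ℝ) x,
      γ * ∑ x', (∑ a, π x a * P x a x') * (V₁ x' - V₂ x')
        = ∑ a, π x a * (Q₁ x a - Q₂ x a) := by
    intro π x
    calc γ * ∑ x', (∑ a, π x a * P x a x') * (V₁ x' - V₂ x')
        = γ * ∑ x', ∑ a, π x a * (P x a x' * (V₁ x' - V₂ x')) := by
          congr 1
          refine Finset.sum_congr rfl fun x' _ => ?_
          rw [Finset.sum_mul]
          exact Finset.sum_congr rfl fun a _ => by ring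
      _ = γ * ∑ a, π x a * ∑ x', P x a x' * (V₁ x' - V₂ x') := by
          rw [Finset.sum_comm]
          congr 1
          exact Finset.sum_congr rfl fun a _ => (Finset.mul_sum _ _ _).symm
      _ = ∑ a, π x a * (γ * ∑ x', P x a x' * (V₁ x' - V₂ x')) := by
          rw [Finset.mul_sum]
          exact Finset.sum_congr rfl fun a _ => by ring
      _ = ∑ a, π x a * (Q₁ x a - Q₂ x a) :=
          Finset.sum_congr rfl fun a _ => by rw [hQdiff]
  constructor
  · intro x
    rw [hd₂]
    apply solve_lin _ hK₂nn hK₂sum γ hγ0 hγ1 _ _ _ x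
    intro y
    simp only [Matrix.of_apply]
    rw [hswap π₂ y, hV₁ y, hV₂ y, ← Finset.sum_sub_distrib, ← Finset.sum_sub_distrib]
    exact Finset.sum_congr rfl fun a _ => by ring
  · intro x
    rw [hd₁]
    apply solve_lin _ hK₁nn hK₁sum γ hγ0 hγ1 _ _ _ x
    intro y
    simp only [Matrix.of_apply]
    rw [hswap π₁ y, hV₁ y, hV₂ y, ← Finset.sum_sub_distrib, ← Finset.sum_sub_distrib]
    exact Finset.sum_congr rfl fun a _ => by ring
end

section
/- Let M₁ = ⟨X, A, P₁, R₁, γ⟩ and M₂ = ⟨X, A, P₂, R₂, γ⟩ be two finite MDPs sharing the same state and action spaces, and let π₁, π₂ be policies. Then: V^{π₁}_{M₁} - V^{π₂}_{M₁} = (V^{π₁}_{M₂} - V^{π₂}_{M₂}) + Q^{π₁}_{M₂}(π₁ - π₂)(d_{M₁}^{π₂} - d_{M₂}^{π₂}) + (Q^{π₁}_{M₁} - Q^{π₁}_{M₂})(π₁ - π₂)d_{M₁}^{π₂}, where the products are understood as: f(π₁-π₂)d denotes the state-vector x ↦ Σ_{x'} d(x'|x)Σ_a (π₁(a|x')-π₂(a|x'))f(x',a).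 -/
open Matrix

/-- A substochastic-type invertibility: `1 - γ•K` is a unit when `K` is row-stochastic
and `0 ≤ γ < 1`. -/
lemma spibb_isUnit_one_sub_smul
    {X : Type*} [Fintype X] [DecidableEq X]
    (K : Matrix X X ℝ) (γ : ℝ) (hγ0 : 0 ≤ γ) (hγ1 : γ < 1)
    (hKnn : ∀ x x', 0 ≤ K x x') (hKsum : ∀ x, ∑ x', K x x' = 1) :
    IsUnit (1 - γ • K) := by
  rw [← Matrix.mulVec_injective_iff_isUnit]
  have hker : ∀ v : X → ℝ, (1 - γ • K) *ᵥ v = 0 → v = 0 := by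
    intro v hv
    have hvx : ∀ x, v x = γ * ∑ x', K x x' * v x' := by
      intro x
      have h := congrFun hv x
      rw [Matrix.sub_mulVec, Matrix.smul_mulVec, Matrix.one_mulVec] at h
      have h2 : v x - γ * ((K *ᵥ v) x) = 0 := by simpa using h
      have h3 : (K *ᵥ v) x = ∑ x', K x x' * v x' := rfl
      rw [h3] at h2
      linarith
    by_cases hX : Nonempty X
    · obtain ⟨x₀, -, hx₀⟩ := Finset.exists_max_image Finset.univ (fun x => |v x|)
        (Finset.univ_nonempty)
      have hle : |v x₀| ≤ γ * |v x₀| := by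
        calc |v x₀| = γ * |∑ x', K x₀ x' * v x'| := by
              rw [hvx x₀, abs_mul, abs_of_nonneg hγ0]
          _ ≤ γ * ∑ x', K x₀ x' * |v x₀| := by
              apply mul_le_mul_of_nonneg_left _ hγ0
              calc |∑ x', K x₀ x' * v x'| ≤ ∑ x', |K x₀ x' * v x'| :=
                    Finset.abs_sum_le_sum_abs _ _
                _ ≤ ∑ x', K x₀ x' * |v x₀| := by
                    apply Finset.sum_le_sum
                    intro x' _
                    rw [abs_mul, abs_of_nonneg (hKnn x₀ x')]
                    exact mul_le_mul_of_nonneg_left (hx₀ x' (Finset.mem_univ x'))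
                      (hKnn x₀ x')
          _ = γ * |v x₀| := by rw [← Finset.sum_mul, hKsum, one_mul]
      have h0 : |v x₀| = 0 := by nlinarith [abs_nonneg (v x₀)]
      funext x
      have : |v x| ≤ 0 := h0 ▸ hx₀ x (Finset.mem_univ x)
      simpa using le_antisymm this (abs_nonneg _)
    · funext x; exact absurd ⟨x⟩ hX
  intro u w huw
  have : (1 - γ • K) *ᵥ (u - w) = 0 := by
    rw [Matrix.mulVec_sub, huw, sub_self]
  have := hker _ this
  funext x
  have := congrFun this x
  simpa [sub_eq_zero] using this

/-- Solving the Bellman-type fixed point: if `W = g + γ K W` pointwise then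
`W = (1 - γK)⁻¹ g`. -/
lemma spibb_solve
    {X : Type*} [Fintype X] [DecidableEq X]
    (K : Matrix X X ℝ) (γ : ℝ) (hγ0 : 0 ≤ γ) (hγ1 : γ < 1)
    (hKnn : ∀ x x', 0 ≤ K x x') (hKsum : ∀ x, ∑ x', K x x' = 1)
    (W g : X → ℝ) (hW : ∀ x, W x = g x + γ * ∑ x', K x x' * W x') :
    ∀ x, W x = ∑ x', (1 - γ • K)⁻¹ x x' * g x' := by
  have hU : IsUnit (1 - γ • K) := spibb_isUnit_one_sub_smul K γ hγ0 hγ1 hKnn hKsum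
  have hdet : IsUnit (1 - γ • K).det := (Matrix.isUnit_iff_isUnit_det _).mp hU
  have hinv : (1 - γ • K)⁻¹ * (1 - γ • K) = 1 := Matrix.nonsing_inv_mul _ hdet
  have hMg : (1 - γ • K) *ᵥ W = g := by
    funext x
    rw [Matrix.sub_mulVec, Matrix.smul_mulVec, Matrix.one_mulVec]
    have h3 : (K *ᵥ W) x = ∑ x', K x x' * W x' := rfl
    have := hW x
    simp only [Pi.sub_apply, Pi.smul_apply, smul_eq_mul, h3]
    linarith
  have : W = (1 - γ • K)⁻¹ *ᵥ g := by
    rw [← hMg, Matrix.mulVec_mulVec, hinv, Matrix.one_mulVec]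
  intro x
  rw [this]
  simp [Matrix.mulVec, dotProduct]


/-- Value difference decomposition across two MDPs `M₁, M₂` on the same state and
action spaces, for two policies `π₁, π₂`. -/
theorem spibb_two_mdp_value_decomposition
    {X A : Type*} [Fintype X] [Fintype A] [DecidableEq X]
    (P₁ P₂ : X → A → X → ℝ) (R₁ R₂ : X → A → ℝ) (γ : ℝ)
    (hγ0 : 0 ≤ γ) (hγ1 : γ < 1)
    (hP₁nn : ∀ x a x', 0 ≤ P₁ x a x') (hP₁sum : ∀ x a, ∑ x', P₁ x a x' = 1)
    (hP₂nn : ∀ x a x', 0 ≤ P₂ x a x') (hP₂sum : ∀ x a, ∑ x', P₂ x a x' = 1)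
    (π₁ π₂ : X → A → ℝ)
    (hπ₁nn : ∀ x a, 0 ≤ π₁ x a) (hπ₁sum : ∀ x, ∑ a, π₁ x a = 1)
    (hπ₂nn : ∀ x a, 0 ≤ π₂ x a) (hπ₂sum : ∀ x, ∑ a, π₂ x a = 1)
    -- Q_{i,j} = Q^{π_j}_{M_i}, V_{i,j} = V^{π_j}_{M_i}
    (Q₁₁ Q₁₂ Q₂₁ Q₂₂ : X → A → ℝ) (V₁₁ V₁₂ V₂₁ V₂₂ : X → ℝ)
    (hV₁₁ : ∀ x, V₁₁ x = ∑ a, π₁ x a * Q₁₁ x a)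
    (hQ₁₁ : ∀ x a, Q₁₁ x a = R₁ x a + γ * ∑ x', P₁ x a x' * V₁₁ x')
    (hV₁₂ : ∀ x, V₁₂ x = ∑ a, π₂ x a * Q₁₂ x a)
    (hQ₁₂ : ∀ x a, Q₁₂ x a = R₁ x a + γ * ∑ x', P₁ x a x' * V₁₂ x')
    (hV₂₁ : ∀ x, V₂₁ x = ∑ a, π₁ x a * Q₂₁ x a)
    (hQ₂₁ : ∀ x a, Q₂₁ x a = R₂ x a + γ * ∑ x', P₂ x a x' * V₂₁ x')
    (hV₂₂ : ∀ x, V₂₂ x = ∑ a, π₂ x a * Q₂₂ x a)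
    (hQ₂₂ : ∀ x a, Q₂₂ x a = R₂ x a + γ * ∑ x', P₂ x a x' * V₂₂ x')
    -- discounted visitation matrices of π₂ in M₁ and in M₂
    (d₁ d₂ : Matrix X X ℝ)
    (hd₁ : d₁ = (1 - γ • (Matrix.of fun x x' => ∑ a, π₂ x a * P₁ x a x'))⁻¹)
    (hd₂ : d₂ = (1 - γ • (Matrix.of fun x x' => ∑ a, π₂ x a * P₂ x a x'))⁻¹) :
    ∀ x, V₁₁ x - V₁₂ x =
      (V₂₁ x - V₂₂ x)
      + ∑ x', (d₁ x x' - d₂ x x') * ∑ a, (π₁ x' a - π₂ x' a) * Q₂₁ x' a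
      + ∑ x', d₁ x x' * ∑ a, (π₁ x' a - π₂ x' a) * (Q₁₁ x' a - Q₂₁ x' a) := by

  -- the two "one-step" mean matrices
  set K₁ : Matrix X X ℝ := Matrix.of fun x x' => ∑ a, π₂ x a * P₁ x a x' with hK₁
  set K₂ : Matrix X X ℝ := Matrix.of fun x x' => ∑ a, π₂ x a * P₂ x a x' with hK₂
  have hK₁nn : ∀ x x', 0 ≤ K₁ x x' := fun x x' =>
    Finset.sum_nonneg fun a _ => mul_nonneg (hπ₂nn x a) (hP₁nn x a x')
  have hK₂nn : ∀ x x', 0 ≤ K₂ x x' := fun x x' =>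
    Finset.sum_nonneg fun a _ => mul_nonneg (hπ₂nn x a) (hP₂nn x a x')
  have hK₁sum : ∀ x, ∑ x', K₁ x x' = 1 := by
    intro x
    simp only [hK₁, Matrix.of_apply]
    rw [Finset.sum_comm]
    calc ∑ a, ∑ x', π₂ x a * P₁ x a x' = ∑ a, π₂ x a * ∑ x', P₁ x a x' := by
          simp [Finset.mul_sum]
      _ = 1 := by simp [hP₁sum, hπ₂sum]
  have hK₂sum : ∀ x, ∑ x', K₂ x x' = 1 := by
    intro x
    simp only [hK₂, Matrix.of_apply]
    rw [Finset.sum_comm]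
    calc ∑ a, ∑ x', π₂ x a * P₂ x a x' = ∑ a, π₂ x a * ∑ x', P₂ x a x' := by
          simp [Finset.mul_sum]
      _ = 1 := by simp [hP₂sum, hπ₂sum]
  -- advantage-like terms
  set g₁ : X → ℝ := fun x => ∑ a, (π₁ x a - π₂ x a) * Q₁₁ x a with hg₁
  set g₂ : X → ℝ := fun x => ∑ a, (π₁ x a - π₂ x a) * Q₂₁ x a with hg₂
  -- recursion for V₁₁ - V₁₂
  have hrec₁ : ∀ x, V₁₁ x - V₁₂ x = g₁ x + γ * ∑ x', K₁ x x' * (V₁₁ x' - V₁₂ x') := by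
    intro x
    have hQd : ∀ a, γ * ∑ x', P₁ x a x' * (V₁₁ x' - V₁₂ x') = Q₁₁ x a - Q₁₂ x a := by
      intro a
      have hsplit : ∑ x', P₁ x a x' * (V₁₁ x' - V₁₂ x')
          = (∑ x', P₁ x a x' * V₁₁ x') - ∑ x', P₁ x a x' * V₁₂ x' := by
        rw [← Finset.sum_sub_distrib]
        exact Finset.sum_congr rfl fun x' _ => by ring
      rw [hsplit, hQ₁₁ x a, hQ₁₂ x a]; ring
    calc V₁₁ x - V₁₂ x
        = ∑ a, ((π₁ x a - π₂ x a) * Q₁₁ x a + π₂ x a * (Q₁₁ x a - Q₁₂ x a)) := by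
          rw [hV₁₁, hV₁₂, ← Finset.sum_sub_distrib]
          exact Finset.sum_congr rfl fun a _ => by ring
      _ = g₁ x + ∑ a, π₂ x a * (Q₁₁ x a - Q₁₂ x a) := by rw [Finset.sum_add_distrib]
      _ = g₁ x + ∑ a, π₂ x a * (γ * ∑ x', P₁ x a x' * (V₁₁ x' - V₁₂ x')) := by
          exact congrArg _ (Finset.sum_congr rfl fun a _ => by rw [← hQd a])
      _ = g₁ x + γ * ∑ x', K₁ x x' * (V₁₁ x' - V₁₂ x') := by
          congr 1
          simp only [hK₁, Matrix.of_apply, Finset.sum_mul, Finset.mul_sum]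
          rw [Finset.sum_comm]
          exact Finset.sum_congr rfl fun a _ => Finset.sum_congr rfl fun x' _ => by ring
  -- recursion for V₂₁ - V₂₂
  have hrec₂ : ∀ x, V₂₁ x - V₂₂ x = g₂ x + γ * ∑ x', K₂ x x' * (V₂₁ x' - V₂₂ x') := by
    intro x
    have hQd : ∀ a, γ * ∑ x', P₂ x a x' * (V₂₁ x' - V₂₂ x') = Q₂₁ x a - Q₂₂ x a := by
      intro a
      have hsplit : ∑ x', P₂ x a x' * (V₂₁ x' - V₂₂ x')
          = (∑ x', P₂ x a x' * V₂₁ x') - ∑ x', P₂ x a x' * V₂₂ x' := by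
        rw [← Finset.sum_sub_distrib]
        exact Finset.sum_congr rfl fun x' _ => by ring
      rw [hsplit, hQ₂₁ x a, hQ₂₂ x a]; ring
    calc V₂₁ x - V₂₂ x
        = ∑ a, ((π₁ x a - π₂ x a) * Q₂₁ x a + π₂ x a * (Q₂₁ x a - Q₂₂ x a)) := by
          rw [hV₂₁, hV₂₂, ← Finset.sum_sub_distrib]
          exact Finset.sum_congr rfl fun a _ => by ring
      _ = g₂ x + ∑ a, π₂ x a * (Q₂₁ x a - Q₂₂ x a) := by rw [Finset.sum_add_distrib]
      _ = g₂ x + ∑ a, π₂ x a * (γ * ∑ x', P₂ x a x' * (V₂₁ x' - V₂₂ x')) := by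
          exact congrArg _ (Finset.sum_congr rfl fun a _ => by rw [← hQd a])
      _ = g₂ x + γ * ∑ x', K₂ x x' * (V₂₁ x' - V₂₂ x') := by
          congr 1
          simp only [hK₂, Matrix.of_apply, Finset.sum_mul, Finset.mul_sum]
          rw [Finset.sum_comm]
          exact Finset.sum_congr rfl fun a _ => Finset.sum_congr rfl fun x' _ => by ring
  have hsol₁ : ∀ x, V₁₁ x - V₁₂ x = ∑ x', d₁ x x' * g₁ x' := by
    intro x
    rw [hd₁]
    exact spibb_solve K₁ γ hγ0 hγ1 hK₁nn hK₁sum _ g₁ hrec₁ x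
  have hsol₂ : ∀ x, V₂₁ x - V₂₂ x = ∑ x', d₂ x x' * g₂ x' := by
    intro x
    rw [hd₂]
    exact spibb_solve K₂ γ hγ0 hγ1 hK₂nn hK₂sum _ g₂ hrec₂ x
  intro x
  have hdiff : ∀ x', ∑ a, (π₁ x' a - π₂ x' a) * (Q₁₁ x' a - Q₂₁ x' a) = g₁ x' - g₂ x' := by
    intro x'
    rw [hg₁, hg₂, ← Finset.sum_sub_distrib]
    exact Finset.sum_congr rfl fun a _ => by ring
  have key : ∑ x', d₂ x x' * g₂ x' + ∑ x', (d₁ x x' - d₂ x x') * g₂ x'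
      + ∑ x', d₁ x x' * (g₁ x' - g₂ x') = ∑ x', d₁ x x' * g₁ x' := by
    rw [← Finset.sum_add_distrib, ← Finset.sum_add_distrib]
    exact Finset.sum_congr rfl fun x' _ => by ring
  rw [hsol₁ x, hsol₂ x]
  simp only [hdiff]
  exact key.symm
end

section
/- Suppose for every state-action pair (x,a) of a finite MDP, |Q^{π_b}_{M*}(x,a) - Q^{π_b}_{M̂}(x,a)| ≤ e_Q(x,a)V_max, and suppose π is (π_b, e_Q, ε)-constrained, i.e., for all x: Σ_a e_Q(x,a)|π(a|x) - π_b(a|x)| ≤ ε. If additionally π is π_b-advantageous in M̂ (i.e., Σ_a A^{π_b}_{M̂}(x,a)π(a|x) ≥ 0 for all x), then for every state x: V^π_{M*}(x) - V^{π_b}_{M*}(x) ≥ -εV_max/(1-γ). -/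
lemma wavg_ge_aux {A : Type*} [Fintype A] (w f : A → ℝ) (hw : ∀ a, 0 ≤ w a)
    (hs : ∑ a, w a = 1) (m : ℝ) (hf : ∀ a, m ≤ f a) : m ≤ ∑ a, w a * f a := by
  calc m = ∑ a, w a * m := by rw [← Finset.sum_mul, hs, one_mul]
    _ ≤ ∑ a, w a * f a :=
      Finset.sum_le_sum fun a _ => mul_le_mul_of_nonneg_left (hf a) (hw a)

/-- Theorem 1 of Soft-SPIBB: any `(π_b, e_Q, ε)`-constrained policy `π` that is
`π_b`-advantageous in the estimated MDP `M̂` satisfies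
`V^π_{M*}(x) - V^{π_b}_{M*}(x) ≥ -ε V_max / (1-γ)` in every state. -/
theorem soft_spibb_theorem_one
    {X A : Type*} [Fintype X] [Fintype A]
    (Pstar Phat : X → A → X → ℝ) (Rstar Rhat : X → A → ℝ)
    (γ Vmax ε : ℝ) (eQ : X → A → ℝ)
    (hγ0 : 0 ≤ γ) (hγ1 : γ < 1) (hVmax : 0 < Vmax) (hε : 0 ≤ ε)
    (heQ : ∀ x a, 0 ≤ eQ x a)
    (hPsnn : ∀ x a x', 0 ≤ Pstar x a x') (hPssum : ∀ x a, ∑ x', Pstar x a x' = 1)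
    (hPhnn : ∀ x a x', 0 ≤ Phat x a x') (hPhsum : ∀ x a, ∑ x', Phat x a x' = 1)
    (π πb : X → A → ℝ)
    (hπnn : ∀ x a, 0 ≤ π x a) (hπsum : ∀ x, ∑ a, π x a = 1)
    (hπbnn : ∀ x a, 0 ≤ πb x a) (hπbsum : ∀ x, ∑ a, πb x a = 1)
    -- Q^π_{M*}, V^π_{M*}
    (Qπ : X → A → ℝ) (Vπ : X → ℝ)
    (hVπ : ∀ x, Vπ x = ∑ a, π x a * Qπ x a)
    (hQπ : ∀ x a, Qπ x a = Rstar x a + γ * ∑ x', Pstar x a x' * Vπ x')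
    -- Q^{π_b}_{M*}, V^{π_b}_{M*}
    (Qb : X → A → ℝ) (Vb : X → ℝ)
    (hVb : ∀ x, Vb x = ∑ a, πb x a * Qb x a)
    (hQb : ∀ x a, Qb x a = Rstar x a + γ * ∑ x', Pstar x a x' * Vb x')
    -- Q^{π_b}_{M̂}, V^{π_b}_{M̂}
    (Qbhat : X → A → ℝ) (Vbhat : X → ℝ)
    (hVbhat : ∀ x, Vbhat x = ∑ a, πb x a * Qbhat x a)
    (hQbhat : ∀ x a, Qbhat x a = Rhat x a + γ * ∑ x', Phat x a x' * Vbhat x')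
    -- estimation error bound on the baseline Q-function
    (herr : ∀ x a, |Qb x a - Qbhat x a| ≤ eQ x a * Vmax)
    -- (π_b, e_Q, ε)-constrained
    (hcon : ∀ x, ∑ a, eQ x a * |π x a - πb x a| ≤ ε)
    -- π_b-advantageous in M̂
    (hadv : ∀ x, 0 ≤ ∑ a, (Qbhat x a - Vbhat x) * π x a) :
    ∀ x, Vπ x - Vb x ≥ -(ε * Vmax) / (1 - γ) := by

  intro x₀
  have hne : Nonempty X := ⟨x₀⟩
  set D : X → ℝ := fun x => Vπ x - Vb x with hD
  set c : ℝ := ε * Vmax with hc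
  have hc0 : 0 ≤ c := mul_nonneg hε hVmax.le
  -- step 2: advantage bound
  have hg : ∀ x, -c ≤ ∑ a, (π x a - πb x a) * Qb x a := by
    intro x
    have hsplit : ∑ a, (π x a - πb x a) * Qb x a
        = (∑ a, (π x a - πb x a) * (Qb x a - Qbhat x a))
          + ∑ a, (π x a - πb x a) * Qbhat x a := by
      rw [← Finset.sum_add_distrib]; apply Finset.sum_congr rfl; intro a _; ring
    have hterm2 : 0 ≤ ∑ a, (π x a - πb x a) * Qbhat x a := by
      have h1 : ∑ a, (π x a - πb x a) * Qbhat x a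
          = ∑ a, (Qbhat x a - Vbhat x) * π x a := by
        have e1 : ∑ a, Vbhat x * π x a = Vbhat x := by
          rw [← Finset.mul_sum, hπsum, mul_one]
        have e2 : ∑ a, πb x a * Qbhat x a = Vbhat x := (hVbhat x).symm
        calc ∑ a, (π x a - πb x a) * Qbhat x a
            = ∑ a, π x a * Qbhat x a - ∑ a, πb x a * Qbhat x a := by
              rw [← Finset.sum_sub_distrib]; apply Finset.sum_congr rfl
              intro a _; ring
          _ = ∑ a, π x a * Qbhat x a - ∑ a, Vbhat x * π x a := by rw [e1, e2]
          _ = ∑ a, (Qbhat x a - Vbhat x) * π x a := by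
              rw [← Finset.sum_sub_distrib]; apply Finset.sum_congr rfl
              intro a _; ring
      rw [h1]; exact hadv x
    have hterm1 : -c ≤ ∑ a, (π x a - πb x a) * (Qb x a - Qbhat x a) := by
      have key : ∑ a, -(eQ x a * |π x a - πb x a| * Vmax)
          ≤ ∑ a, (π x a - πb x a) * (Qb x a - Qbhat x a) := by
        apply Finset.sum_le_sum
        intro a _
        have h1 : |(π x a - πb x a) * (Qb x a - Qbhat x a)|
            ≤ eQ x a * |π x a - πb x a| * Vmax := by
          rw [abs_mul]
          calc |π x a - πb x a| * |Qb x a - Qbhat x a|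
              ≤ |π x a - πb x a| * (eQ x a * Vmax) :=
                mul_le_mul_of_nonneg_left (herr x a) (abs_nonneg _)
            _ = eQ x a * |π x a - πb x a| * Vmax := by ring
        linarith [neg_abs_le ((π x a - πb x a) * (Qb x a - Qbhat x a))]
      have hsum : ∑ a, eQ x a * |π x a - πb x a| * Vmax ≤ c := by
        calc ∑ a, eQ x a * |π x a - πb x a| * Vmax
            = (∑ a, eQ x a * |π x a - πb x a|) * Vmax := by
              rw [Finset.sum_mul]
          _ ≤ ε * Vmax := mul_le_mul_of_nonneg_right (hcon x) hVmax.le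
      rw [Finset.sum_neg_distrib] at key
      linarith
    linarith
  -- step 1+3: Bellman for D
  have hDrec : ∀ x, D x = (∑ a, (π x a - πb x a) * Qb x a)
      + γ * ∑ a, π x a * ∑ x', Pstar x a x' * D x' := by
    intro x
    have hQdiff : ∀ a, Qπ x a - Qb x a = γ * ∑ x', Pstar x a x' * D x' := by
      intro a
      rw [hQπ, hQb]
      have : ∑ x', Pstar x a x' * D x'
          = (∑ x', Pstar x a x' * Vπ x') - ∑ x', Pstar x a x' * Vb x' := by
        rw [← Finset.sum_sub_distrib]; apply Finset.sum_congr rfl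
        intro x' _; simp [hD]; ring
      rw [this]; ring
    have : D x = ∑ a, π x a * (Qπ x a - Qb x a)
        + ∑ a, (π x a - πb x a) * Qb x a := by
      simp only [hD, hVπ x, hVb x]
      rw [← Finset.sum_add_distrib, ← Finset.sum_sub_distrib]
      apply Finset.sum_congr rfl; intro a _; ring
    rw [this]
    have : ∑ a, π x a * (Qπ x a - Qb x a)
        = γ * ∑ a, π x a * ∑ x', Pstar x a x' * D x' := by
      rw [Finset.mul_sum]; apply Finset.sum_congr rfl
      intro a _; rw [hQdiff a]; ring
    rw [this]; ring
  -- minimum of D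
  obtain ⟨xm, _, hxm⟩ := Finset.exists_min_image Finset.univ D ⟨x₀, Finset.mem_univ x₀⟩
  have hxm' : ∀ x, D xm ≤ D x := fun x => hxm x (Finset.mem_univ x)
  set m : ℝ := D xm with hm
  have hmb : m ≥ γ * m - c := by
    have havg : m ≤ ∑ a, π xm a * ∑ x', Pstar xm a x' * D x' := by
      apply wavg_ge_aux _ _ (hπnn xm) (hπsum xm)
      intro a
      exact wavg_ge_aux _ _ (hPsnn xm a) (hPssum xm a) m hxm'
    have := hDrec xm
    have hg' := hg xm
    nlinarith
  have hfin : m ≥ -c / (1 - γ) := by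
    rw [ge_iff_le, div_le_iff₀ (by linarith : (0:ℝ) < 1 - γ)]
    nlinarith
  calc Vπ x₀ - Vb x₀ = D x₀ := rfl
    _ ≥ m := hxm' x₀
    _ ≥ -(ε * Vmax) / (1 - γ) := hfin
end

section
/- Let M* = ⟨X,A,P*,R*,γ⟩ and M̂ = ⟨X,A,P̂,R̂,γ⟩ be finite MDPs with rewards bounded by R_max and V_max ≥ R_max/(1-γ), and suppose for all (x,a): ||P*(·|x,a) - P̂(·|x,a)||₁ ≤ e_P(x,a) and |R*(x,a) - R̂(x,a)| ≤ e_P(x,a)R_max. Assume there exists κ < 1/γ such that Σ_{x',a'} e_P(x',a')π_b(a'|x')P*(x'|x,a) ≤ κ e_P(x,a) for all (x,a). Then any policy π satisfying Σ_a e_P(x,a)|π(a|x) - π_b(a|x)| ≤ ε for all x obeys, for every (x,a): |Q^π_{M*}(x,a) - Q^π_{M̂}(x,a)| ≤ (e_P(x,a)/(1-κγ) + γε/((1-γ)(1-κγ)))V_max. -/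
/-!
Let `D = |Q* - Q̂|` and `B = c₁ e_P + c₂` be the claimed bound, both viewed as vectors indexed by
state-action pairs, and let `K` be the transition matrix of the state-action chain of `π` in `M*`.
Expanding both Bellman equations, the reward error, the transition error tested against
`|V̂| ≤ V_max`, and the propagated error give `D ≤ e_P V_max + γ K D`. On the other hand
κ-smoothness and the constraint on `π` give `K e_P ≤ κ e_P + ε`, so that `B` satisfies
`e_P V_max + γ K B ≤ B`. Since `K` is row-stochastic and `γ < 1`, looking at the pair where
`D - B` is largest shows that this sub- and super-solution are ordered: `D ≤ B`.
-/

open Finset Matrix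

theorem abs_sum_mul_le_sum_abs_mul {ι : Type*} [Fintype ι] (w f : ι → ℝ) {C : ℝ}
    (hf : ∀ i, |f i| ≤ C) : |∑ i, w i * f i| ≤ (∑ i, |w i|) * C :=
  calc |∑ i, w i * f i| ≤ ∑ i, |w i| * |f i| := by
        simpa only [abs_mul] using abs_sum_le_sum_abs (fun i => w i * f i) univ
    _ ≤ ∑ i, |w i| * C := sum_le_sum fun i _ => mul_le_mul_of_nonneg_left (hf i) (abs_nonneg _)
    _ = (∑ i, |w i|) * C := (sum_mul ..).symm

theorem sum_mul_le_sum_mul_add_sum_mul_abs_sub {ι : Type*} [Fintype ι] (p q f : ι → ℝ)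
    (hf : ∀ i, 0 ≤ f i) : ∑ i, p i * f i ≤ ∑ i, q i * f i + ∑ i, f i * |p i - q i| := by
  rw [← sum_add_distrib]
  refine sum_le_sum fun i _ => ?_
  nlinarith [le_abs_self (p i - q i), hf i]

theorem le_of_le_add_smul_mulVec_of_add_smul_mulVec_le {ι : Type*} [Fintype ι] [DecidableEq ι]
    {M : Matrix ι ι ℝ} (hM : M ∈ rowStochastic ℝ ι) {γ : ℝ} (hγ0 : 0 ≤ γ) (hγ1 : γ < 1)
    {g u v : ι → ℝ} (hu : u ≤ g + γ • M *ᵥ u) (hv : g + γ • M *ᵥ v ≤ v) : u ≤ v := by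
  intro i
  have : Nonempty ι := ⟨i⟩
  obtain ⟨i₀, hi₀⟩ := Finite.exists_max (u - v)
  simp only [Pi.sub_apply] at hi₀
  set m := u i₀ - v i₀
  have hMu : M *ᵥ u ≤ M *ᵥ v + m • 1 := by
    have hnonneg := nonneg_mulVec_of_mem_rowStochastic hM (x := v + m • 1 - u)
      fun j => by simpa [sub_nonneg, add_comm] using hi₀ j
    rw [mulVec_sub, mulVec_add, mulVec_smul, one_vecMul_of_mem_rowStochastic hM] at hnonneg
    exact fun j => sub_nonneg.1 (hnonneg j)
  have hm : m ≤ γ * m := by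
    have hMu₀ := mul_le_mul_of_nonneg_left (hMu i₀) hγ0
    have hu₀ := hu i₀
    have hv₀ := hv i₀
    simp only [Pi.add_apply, Pi.smul_apply, smul_eq_mul, Pi.one_apply, mul_one] at hMu₀ hu₀ hv₀
    linarith
  have hm0 : m ≤ 0 := by nlinarith
  linarith [hi₀ i]

section StateAction

variable {X A : Type*} [Fintype X] [Fintype A]

def stateActionKernel (P : X → A → X → ℝ) (π : X → A → ℝ) : Matrix (X × A) (X × A) ℝ :=
  Matrix.of fun s s' => P s.1 s.2 s'.1 * π s'.1 s'.2

theorem stateActionKernel_mulVec (P : X → A → X → ℝ) (π : X → A → ℝ) (Q : X → A → ℝ)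
    (x : X) (a : A) :
    (stateActionKernel P π *ᵥ Function.uncurry Q) (x, a) =
      ∑ x', P x a x' * ∑ a', π x' a' * Q x' a' := by
  simp only [stateActionKernel, mulVec, dotProduct, of_apply, Fintype.sum_prod_type,
    Function.uncurry_apply_pair, mul_sum, mul_assoc]

theorem stateActionKernel_mem_rowStochastic [DecidableEq X] [DecidableEq A]
    {P : X → A → X → ℝ} {π : X → A → ℝ}
    (hPnn : ∀ x a x', 0 ≤ P x a x') (hPsum : ∀ x a, ∑ x', P x a x' = 1)
    (hπnn : ∀ x a, 0 ≤ π x a) (hπsum : ∀ x, ∑ a, π x a = 1) :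
    stateActionKernel P π ∈ rowStochastic ℝ (X × A) := by
  refine mem_rowStochastic_iff_sum.2 ⟨fun s s' => mul_nonneg (hPnn ..) (hπnn ..), fun s => ?_⟩
  simp only [stateActionKernel, of_apply, Fintype.sum_prod_type, ← mul_sum, hπsum, mul_one,
    hPsum]

theorem abs_sub_le_of_bellman {P₁ P₂ : X → A → X → ℝ} {R₁ R₂ : X → A → ℝ} {π : X → A → ℝ}
    {γ V : ℝ} {Q₁ Q₂ : X → A → ℝ} (hγ0 : 0 ≤ γ) (hP₁nn : ∀ x a x', 0 ≤ P₁ x a x')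
    (hπnn : ∀ x a, 0 ≤ π x a) (hπsum : ∀ x, ∑ a, π x a = 1)
    (hQ₁ : ∀ x a, Q₁ x a = R₁ x a + γ * ∑ x', P₁ x a x' * ∑ a', π x' a' * Q₁ x' a')
    (hQ₂ : ∀ x a, Q₂ x a = R₂ x a + γ * ∑ x', P₂ x a x' * ∑ a', π x' a' * Q₂ x' a')
    (hQ₂V : ∀ x a, |Q₂ x a| ≤ V) (x : X) (a : A) :
    |Q₁ x a - Q₂ x a| ≤ |R₁ x a - R₂ x a| + γ * ((∑ x', |P₁ x a x' - P₂ x a x'|) * V) +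
      γ * ∑ x', P₁ x a x' * ∑ a', π x' a' * |Q₁ x' a' - Q₂ x' a'| := by
  have hV₂ : ∀ x', |∑ a', π x' a' * Q₂ x' a'| ≤ V := fun x' => by
    simpa [abs_of_nonneg (hπnn x' _), hπsum] using abs_sum_mul_le_sum_abs_mul (π x') _ (hQ₂V x')
  have hsplit : Q₁ x a - Q₂ x a = (R₁ x a - R₂ x a) +
      γ * ∑ x', (P₁ x a x' - P₂ x a x') * ∑ a', π x' a' * Q₂ x' a' +
      γ * ∑ x', P₁ x a x' * ∑ a', π x' a' * (Q₁ x' a' - Q₂ x' a') := by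
    rw [hQ₁ x a, hQ₂ x a]
    simp only [mul_sub, sub_mul, sum_sub_distrib]
    ring
  have hpropagated : |∑ x', P₁ x a x' * ∑ a', π x' a' * (Q₁ x' a' - Q₂ x' a')| ≤
      ∑ x', P₁ x a x' * ∑ a', π x' a' * |Q₁ x' a' - Q₂ x' a'| := by
    refine (abs_sum_le_sum_abs _ _).trans (sum_le_sum fun x' _ => ?_)
    rw [abs_mul, abs_of_nonneg (hP₁nn ..)]
    refine mul_le_mul_of_nonneg_left ((abs_sum_le_sum_abs _ _).trans_eq ?_) (hP₁nn ..)
    simp only [abs_mul, abs_of_nonneg (hπnn ..)]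
  rw [hsplit]
  refine (abs_add_three _ _ _).trans ?_
  simp only [abs_mul, abs_of_nonneg hγ0]
  gcongr
  exact abs_sum_mul_le_sum_abs_mul _ _ hV₂

theorem sum_transition_sum_policy_mul_le {P : X → A → X → ℝ} {π πb : X → A → ℝ}
    {e : X → A → ℝ} {κ ε : ℝ} (hPnn : ∀ x a x', 0 ≤ P x a x') (hPsum : ∀ x a, ∑ x', P x a x' = 1)
    (he : ∀ x a, 0 ≤ e x a)
    (hsmooth : ∀ x a, ∑ x', ∑ a', e x' a' * πb x' a' * P x a x' ≤ κ * e x a)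
    (hcon : ∀ x, ∑ a, e x a * |π x a - πb x a| ≤ ε) (x : X) (a : A) :
    ∑ x', P x a x' * ∑ a', π x' a' * e x' a' ≤ κ * e x a + ε :=
  calc ∑ x', P x a x' * ∑ a', π x' a' * e x' a'
      ≤ ∑ x', P x a x' * (∑ a', πb x' a' * e x' a' + ε) := by
        refine sum_le_sum fun x' _ => mul_le_mul_of_nonneg_left ?_ (hPnn ..)
        linarith [sum_mul_le_sum_mul_add_sum_mul_abs_sub (π x') (πb x') _ (he x'), hcon x']
    _ = ∑ x', ∑ a', e x' a' * πb x' a' * P x a x' + ε := by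
        have hswap : ∀ x', P x a x' * ∑ a', πb x' a' * e x' a' =
            ∑ a', e x' a' * πb x' a' * P x a x' := fun x' => by
          rw [mul_sum]
          exact sum_congr rfl fun _ _ => by ring
        simp only [mul_add, sum_add_distrib, hswap]
        rw [← sum_mul, hPsum, one_mul]
    _ ≤ κ * e x a + ε := by linarith [hsmooth x a]

theorem uncurry_abs_sub_le_of_bellman {P₁ P₂ : X → A → X → ℝ} {R₁ R₂ : X → A → ℝ}
    {π : X → A → ℝ} {e : X → A → ℝ} {γ Rmax V : ℝ} {Q₁ Q₂ : X → A → ℝ}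
    (hγ0 : 0 ≤ γ) (hγ1 : γ < 1) (hV : Rmax / (1 - γ) ≤ V) (he : ∀ x a, 0 ≤ e x a)
    (hP₁nn : ∀ x a x', 0 ≤ P₁ x a x') (hπnn : ∀ x a, 0 ≤ π x a) (hπsum : ∀ x, ∑ a, π x a = 1)
    (hPerr : ∀ x a, ∑ x', |P₁ x a x' - P₂ x a x'| ≤ e x a)
    (hRerr : ∀ x a, |R₁ x a - R₂ x a| ≤ e x a * Rmax)
    (hQ₁ : ∀ x a, Q₁ x a = R₁ x a + γ * ∑ x', P₁ x a x' * ∑ a', π x' a' * Q₁ x' a')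
    (hQ₂ : ∀ x a, Q₂ x a = R₂ x a + γ * ∑ x', P₂ x a x' * ∑ a', π x' a' * Q₂ x' a')
    (hQ₂V : ∀ x a, |Q₂ x a| ≤ V) :
    Function.uncurry (fun x a => |Q₁ x a - Q₂ x a|) ≤ V • Function.uncurry e +
      γ • stateActionKernel P₁ π *ᵥ Function.uncurry (fun x a => |Q₁ x a - Q₂ x a|) := by
  rintro ⟨x, a⟩
  have hV0 : 0 ≤ V := (abs_nonneg _).trans (hQ₂V x a)
  have hRmax : e x a * Rmax ≤ e x a * ((1 - γ) * V) :=
    mul_le_mul_of_nonneg_left (by rwa [div_le_iff₀' (by linarith)] at hV) (he x a)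
  have hP := mul_le_mul_of_nonneg_right (hPerr x a) hV0
  simp only [Pi.add_apply, Pi.smul_apply, smul_eq_mul, stateActionKernel_mulVec,
    Function.uncurry_apply_pair]
  refine (abs_sub_le_of_bellman hγ0 hP₁nn hπnn hπsum hQ₁ hQ₂ hQ₂V x a).trans ?_
  nlinarith [hRerr x a]

/-- The constants `c₁, c₂` are the ones for which `c₁ e + c₂` is a fixed point of
`w ↦ V e + γ K w` once `K e` is replaced by its bound `κ e + ε`. -/
theorem smul_add_smul_stateActionKernel_mulVec_le [DecidableEq X] [DecidableEq A]
    {P : X → A → X → ℝ} {π πb e : X → A → ℝ} {γ κ ε V c₁ c₂ : ℝ}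
    (hPnn : ∀ x a x', 0 ≤ P x a x') (hPsum : ∀ x a, ∑ x', P x a x' = 1)
    (hπnn : ∀ x a, 0 ≤ π x a) (hπsum : ∀ x, ∑ a, π x a = 1) (he : ∀ x a, 0 ≤ e x a)
    (hsmooth : ∀ x a, ∑ x', ∑ a', e x' a' * πb x' a' * P x a x' ≤ κ * e x a)
    (hcon : ∀ x, ∑ a, e x a * |π x a - πb x a| ≤ ε)
    (hγ0 : 0 ≤ γ) (hc₁0 : 0 ≤ c₁) (hc₁ : c₁ * (1 - κ * γ) = V) (hc₂ : c₂ * (1 - γ) = γ * ε * c₁) :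
    V • Function.uncurry e + γ • stateActionKernel P π *ᵥ (c₁ • Function.uncurry e + c₂ • 1) ≤
      c₁ • Function.uncurry e + c₂ • 1 := by
  rw [mulVec_add, mulVec_smul, mulVec_smul,
    one_vecMul_of_mem_rowStochastic (stateActionKernel_mem_rowStochastic hPnn hPsum hπnn hπsum)]
  rintro ⟨x, a⟩
  have hKe := sum_transition_sum_policy_mul_le hPnn hPsum he hsmooth hcon x a
  simp only [Pi.add_apply, Pi.smul_apply, smul_eq_mul, Pi.one_apply,
    stateActionKernel_mulVec, Function.uncurry_apply_pair]
  calc V * e x a + γ * (c₁ * ∑ x', P x a x' * ∑ a', π x' a' * e x' a' + c₂ * 1)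
      ≤ V * e x a + γ * (c₁ * (κ * e x a + ε) + c₂ * 1) := by gcongr
    _ = c₁ * e x a + c₂ * 1 := by linear_combination (-e x a) * hc₁ - hc₂

end StateAction

theorem soft_spibb_lemma_one_general
    {X A : Type*} [Fintype X] [Fintype A]
    (Pstar Phat : X → A → X → ℝ) (Rstar Rhat : X → A → ℝ)
    (γ Rmax Vmax κ ε : ℝ) (eP : X → A → ℝ)
    (hγ0 : 0 ≤ γ) (hγ1 : γ < 1)
    (hVmax : Rmax / (1 - γ) ≤ Vmax)
    (hκγ : κ * γ < 1)
    (heP : ∀ x a, 0 ≤ eP x a)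
    (hPsnn : ∀ x a x', 0 ≤ Pstar x a x') (hPssum : ∀ x a, ∑ x', Pstar x a x' = 1)
    (hPerr : ∀ x a, ∑ x', |Pstar x a x' - Phat x a x'| ≤ eP x a)
    (hRerr : ∀ x a, |Rstar x a - Rhat x a| ≤ eP x a * Rmax)
    (π πb : X → A → ℝ)
    (hπnn : ∀ x a, 0 ≤ π x a) (hπsum : ∀ x, ∑ a, π x a = 1)
    -- Assumption 1 (κ-smoothness)
    (hsmooth : ∀ x a, ∑ x', ∑ a', eP x' a' * πb x' a' * Pstar x a x' ≤ κ * eP x a)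
    -- (π_b, e_P, ε)-constrained
    (hcon : ∀ x, ∑ a, eP x a * |π x a - πb x a| ≤ ε)
    -- Q-functions of π in M* and M̂ (Bellman fixed points)
    (Qstar Qhat : X → A → ℝ)
    (hQstar : ∀ x a, Qstar x a =
      Rstar x a + γ * ∑ x', Pstar x a x' * ∑ a', π x' a' * Qstar x' a')
    (hQhat : ∀ x a, Qhat x a =
      Rhat x a + γ * ∑ x', Phat x a x' * ∑ a', π x' a' * Qhat x' a')
    (hQhatB : ∀ x a, |Qhat x a| ≤ Vmax) :
    ∀ x a, |Qstar x a - Qhat x a| ≤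
      (eP x a / (1 - κ * γ) + γ * ε / ((1 - γ) * (1 - κ * γ))) * Vmax := by
  classical
  intro x a
  have hγ' : 0 < 1 - γ := by linarith
  have hκγ' : 0 < 1 - κ * γ := by linarith
  have hVmax0 : 0 ≤ Vmax := (abs_nonneg _).trans (hQhatB x a)
  set c₁ := Vmax / (1 - κ * γ)
  set c₂ := γ * ε * Vmax / ((1 - γ) * (1 - κ * γ))
  have hc₂ : c₂ * (1 - γ) = γ * ε * c₁ := by
    simp only [c₁, c₂]
    field_simp
  have hsub := uncurry_abs_sub_le_of_bellman hγ0 hγ1 hVmax heP hPsnn hπnn hπsum hPerr hRerr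
    hQstar hQhat hQhatB
  have hsuper := smul_add_smul_stateActionKernel_mulVec_le hPsnn hPssum hπnn hπsum heP hsmooth
    hcon hγ0 (by positivity) (div_mul_cancel₀ _ hκγ'.ne') hc₂
  refine (le_of_le_add_smul_mulVec_of_add_smul_mulVec_le
    (stateActionKernel_mem_rowStochastic hPsnn hPssum hπnn hπsum) hγ0 hγ1 hsub hsuper
    (x, a)).trans_eq ?_
  simp only [Pi.add_apply, Pi.smul_apply, smul_eq_mul, Pi.one_apply, Function.uncurry_apply_pair,
    c₂]
  ring

/-- Lemma 1 of Soft-SPIBB: under the κ-smoothness assumption, any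
`(π_b, e_P, ε)`-constrained policy `π` has its `Q`-function in the true MDP close
to its `Q`-function in the estimated MDP. -/
theorem soft_spibb_lemma_one
    {X A : Type*} [Fintype X] [Fintype A]
    (Pstar Phat : X → A → X → ℝ) (Rstar Rhat : X → A → ℝ)
    (γ Rmax Vmax κ ε : ℝ) (eP : X → A → ℝ)
    (hγ0 : 0 ≤ γ) (hγ1 : γ < 1)
    (hRmax : 0 ≤ Rmax) (hVmax : Rmax / (1 - γ) ≤ Vmax)
    (hκ0 : 0 ≤ κ) (hκγ : κ * γ < 1) (hε : 0 ≤ ε)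
    (heP : ∀ x a, 0 ≤ eP x a)
    (hPsnn : ∀ x a x', 0 ≤ Pstar x a x') (hPssum : ∀ x a, ∑ x', Pstar x a x' = 1)
    (hPhnn : ∀ x a x', 0 ≤ Phat x a x') (hPhsum : ∀ x a, ∑ x', Phat x a x' = 1)
    (hRb : ∀ x a, |Rstar x a| ≤ Rmax)
    (hPerr : ∀ x a, ∑ x', |Pstar x a x' - Phat x a x'| ≤ eP x a)
    (hRerr : ∀ x a, |Rstar x a - Rhat x a| ≤ eP x a * Rmax)
    (π πb : X → A → ℝ)
    (hπnn : ∀ x a, 0 ≤ π x a) (hπsum : ∀ x, ∑ a, π x a = 1)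
    (hπbnn : ∀ x a, 0 ≤ πb x a) (hπbsum : ∀ x, ∑ a, πb x a = 1)
    -- Assumption 1 (κ-smoothness)
    (hsmooth : ∀ x a, ∑ x', ∑ a', eP x' a' * πb x' a' * Pstar x a x' ≤ κ * eP x a)
    -- (π_b, e_P, ε)-constrained
    (hcon : ∀ x, ∑ a, eP x a * |π x a - πb x a| ≤ ε)
    -- Q-functions of π in M* and M̂ (Bellman fixed points)
    (Qstar Qhat : X → A → ℝ)
    (hQstar : ∀ x a, Qstar x a =
      Rstar x a + γ * ∑ x', Pstar x a x' * ∑ a', π x' a' * Qstar x' a')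
    (hQhat : ∀ x a, Qhat x a =
      Rhat x a + γ * ∑ x', Phat x a x' * ∑ a', π x' a' * Qhat x' a')
    (hQhatB : ∀ x a, |Qhat x a| ≤ Vmax) :
    ∀ x a, |Qstar x a - Qhat x a| ≤
      (eP x a / (1 - κ * γ) + γ * ε / ((1 - γ) * (1 - κ * γ))) * Vmax :=
  soft_spibb_lemma_one_general Pstar Phat Rstar Rhat γ Rmax Vmax κ ε eP hγ0 hγ1 hVmax hκγ heP hPsnn
    hPssum hPerr hRerr π πb hπnn hπsum hsmooth hcon Qstar Qhat hQstar hQhat hQhatB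
end

section
/- Under the assumptions of the Soft-SPIBB Q-error lemma (||P*-P̂||₁ ≤ e_P, |R*-R̂| ≤ e_P·R_max pointwise, the κ-smoothness assumption with κγ < 1, and π being (π_b, e_P, ε)-constrained), the following bound holds for every state x: V^π_{M*}(x) - V^{π_b}_{M*}(x) ≥ V^π_{M̂}(x) - V^{π_b}_{M̂}(x) - 2||d^{π_b}_{M*}(·|x) - d^{π_b}_{M̂}(·|x)||₁ · V_max - ((1+γ)/((1-γ)²(1-κγ))) · ε · V_max. -/
open Matrix

lemma stoch_inv_facts {X : Type*} [Fintype X] [DecidableEq X]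
    (γ : ℝ) (hγ0 : 0 ≤ γ) (hγ1 : γ < 1)
    (Q : Matrix X X ℝ) (hQ0 : ∀ x y, 0 ≤ Q x y) (hQ1 : ∀ x, ∑ y, Q x y = 1) :
    ((1 : Matrix X X ℝ) - γ • Q)⁻¹ * ((1 : Matrix X X ℝ) - γ • Q) = 1 ∧
    (∀ x y, 0 ≤ ((1 : Matrix X X ℝ) - γ • Q)⁻¹ x y) ∧
    (∀ x, ∑ y, ((1 : Matrix X X ℝ) - γ • Q)⁻¹ x y = 1 / (1 - γ)) := by
  set A : Matrix X X ℝ := 1 - γ • Q with hA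
  have hγ1' : (0:ℝ) < 1 - γ := by linarith
  have hAentry : ∀ x y, A x y = (if x = y then (1:ℝ) else 0) - γ * Q x y := by
    intro x y
    simp [hA, Matrix.one_apply, Matrix.sub_apply, Matrix.smul_apply]
  have hdet : IsUnit A.det := by
    rw [isUnit_iff_ne_zero]
    intro h0
    obtain ⟨v, hv, hAv⟩ := (Matrix.exists_mulVec_eq_zero_iff).2 h0
    obtain ⟨x1, hx1⟩ : ∃ x, v x ≠ 0 := Function.ne_iff.mp hv
    have hne : (Finset.univ : Finset X).Nonempty := ⟨x1, Finset.mem_univ x1⟩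
    obtain ⟨x0, _, hx0⟩ := Finset.exists_mem_eq_sup' hne (fun y => |v y|)
    set M := Finset.sup' Finset.univ hne (fun y => |v y|) with hM
    have hMle : ∀ y, |v y| ≤ M := fun y => Finset.le_sup' (fun y => |v y|) (Finset.mem_univ y)
    have hvx : ∀ x, v x = γ * ∑ y, Q x y * v y := by
      intro x
      have h2 : ∑ y, A x y * v y = v x - γ * ∑ y, Q x y * v y := by
        have he : ∀ y, A x y * v y = (if x = y then v y else 0) - γ * (Q x y * v y) := by
          intro y; rw [hAentry]; split <;> ring
        rw [Finset.sum_congr rfl fun y _ => he y, Finset.sum_sub_distrib,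
          Finset.sum_ite_eq, ← Finset.mul_sum]
        simp
      have h := congrFun hAv x
      rw [Matrix.mulVec, dotProduct, h2] at h
      simp only [Pi.zero_apply] at h
      linarith
    have hle : M ≤ γ * M := by
      calc M = |v x0| := hx0
        _ = γ * |∑ y, Q x0 y * v y| := by
            rw [hvx x0, abs_mul, abs_of_nonneg hγ0]
        _ ≤ γ * ∑ y, |Q x0 y * v y| := by
            exact mul_le_mul_of_nonneg_left (Finset.abs_sum_le_sum_abs _ _) hγ0
        _ ≤ γ * ∑ y, Q x0 y * M := by
            apply mul_le_mul_of_nonneg_left _ hγ0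
            apply Finset.sum_le_sum
            intro y _
            rw [abs_mul, abs_of_nonneg (hQ0 x0 y)]
            exact mul_le_mul_of_nonneg_left (hMle y) (hQ0 x0 y)
        _ = γ * M := by rw [← Finset.sum_mul, hQ1 x0, one_mul]
    have hM0 : M ≤ 0 := by nlinarith
    have := hMle x1
    have := abs_pos.mpr hx1
    linarith
  have h1 : A * A⁻¹ = 1 := Matrix.mul_nonsing_inv A hdet
  have h2 : A⁻¹ * A = 1 := Matrix.nonsing_inv_mul A hdet
  refine ⟨h2, ?_, ?_⟩
  · -- nonnegativity
    have hrec : ∀ x y, A⁻¹ x y = (if x = y then (1:ℝ) else 0) + γ * ∑ z, Q x z * A⁻¹ z y := by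
      intro x y
      have hb : A⁻¹ - γ • (Q * A⁻¹) = 1 := by
        have : A * A⁻¹ = (1 - γ • Q) * A⁻¹ := by rw [hA]
        rw [this, sub_mul, one_mul, Matrix.smul_mul] at h1
        exact h1
      have := congrFun (congrFun hb x) y
      simp only [Matrix.sub_apply, Matrix.smul_apply, Matrix.one_apply, Matrix.mul_apply,
        smul_eq_mul] at this
      rw [← this]
      ring
    intro x y
    by_contra hneg
    push_neg at hneg
    have hneX : Nonempty (X × X) := ⟨(x, y)⟩
    have hne : (Finset.univ : Finset (X × X)).Nonempty := Finset.univ_nonempty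
    obtain ⟨p0, _, hp0⟩ := Finset.exists_mem_eq_inf' hne (fun p => A⁻¹ p.1 p.2)
    set α := Finset.inf' Finset.univ hne (fun p => A⁻¹ p.1 p.2) with hα
    have hαle : ∀ z w, α ≤ A⁻¹ z w := fun z w => Finset.inf'_le _ (Finset.mem_univ (z, w))
    have hα0 : α < 0 := lt_of_le_of_lt (hαle x y) hneg
    have hga : γ * α ≤ α := by
      calc γ * α = 0 + γ * ∑ z, Q p0.1 z * α := by
            rw [← Finset.sum_mul, hQ1, one_mul, zero_add]
        _ ≤ (if p0.1 = p0.2 then (1:ℝ) else 0) + γ * ∑ z, Q p0.1 z * A⁻¹ z p0.2 := by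
            apply add_le_add
            · positivity
            · apply mul_le_mul_of_nonneg_left _ hγ0
              apply Finset.sum_le_sum
              intro z _
              exact mul_le_mul_of_nonneg_left (hαle z p0.2) (hQ0 _ _)
        _ = A⁻¹ p0.1 p0.2 := (hrec _ _).symm
        _ = α := hp0.symm
    nlinarith
  · -- row sums
    intro x
    have hrow : ∀ z, ∑ y, A z y = 1 - γ := by
      intro z
      simp only [hAentry, Finset.sum_sub_distrib, Finset.sum_ite_eq, Finset.mem_univ, if_true,
        ← Finset.mul_sum, hQ1]
      ring
    have h3 : ∑ y, (A⁻¹ * A) x y = 1 := by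
      rw [h2]
      simp [Matrix.one_apply, Finset.sum_ite_eq]
    have h4 : ∑ y, (A⁻¹ * A) x y = (1 - γ) * ∑ z, A⁻¹ x z := by
      simp only [Matrix.mul_apply]
      rw [Finset.sum_comm]
      rw [Finset.mul_sum]
      apply Finset.sum_congr rfl
      intro z _
      rw [← Finset.mul_sum, hrow z]
      ring
    rw [h4] at h3
    rw [eq_div_iff (by linarith : (1:ℝ) - γ ≠ 0)]
    linarith

set_option maxHeartbeats 2000000 in
/-- Theorem 2 of Soft-SPIBB: safe policy improvement bound for any
`(π_b, e_P, ε)`-constrained policy under the κ-smoothness assumption. -/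
theorem soft_spibb_theorem_two
    {X A : Type*} [Fintype X] [Fintype A] [DecidableEq X]
    (Pstar Phat : X → A → X → ℝ) (Rstar Rhat : X → A → ℝ)
    (γ Rmax Vmax κ ε : ℝ) (eP : X → A → ℝ)
    (hγ0 : 0 ≤ γ) (hγ1 : γ < 1)
    (hRmax : 0 ≤ Rmax) (hVmax : Rmax / (1 - γ) ≤ Vmax)
    (hκ0 : 0 ≤ κ) (hκγ : κ * γ < 1) (hε : 0 ≤ ε)
    (heP : ∀ x a, 0 ≤ eP x a)
    (hPsnn : ∀ x a x', 0 ≤ Pstar x a x') (hPssum : ∀ x a, ∑ x', Pstar x a x' = 1)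
    (hPhnn : ∀ x a x', 0 ≤ Phat x a x') (hPhsum : ∀ x a, ∑ x', Phat x a x' = 1)
    (hRb : ∀ x a, |Rstar x a| ≤ Rmax)
    (hPerr : ∀ x a, ∑ x', |Pstar x a x' - Phat x a x'| ≤ eP x a)
    (hRerr : ∀ x a, |Rstar x a - Rhat x a| ≤ eP x a * Rmax)
    (π πb : X → A → ℝ)
    (hπnn : ∀ x a, 0 ≤ π x a) (hπsum : ∀ x, ∑ a, π x a = 1)
    (hπbnn : ∀ x a, 0 ≤ πb x a) (hπbsum : ∀ x, ∑ a, πb x a = 1)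
    -- Assumption 1 (κ-smoothness)
    (hsmooth : ∀ x a, ∑ x', ∑ a', eP x' a' * πb x' a' * Pstar x a x' ≤ κ * eP x a)
    -- (π_b, e_P, ε)-constrained
    (hcon : ∀ x, ∑ a, eP x a * |π x a - πb x a| ≤ ε)
    -- Q and V functions of π and π_b in M* and M̂
    (Qπstar Qπhat Qbstar Qbhat : X → A → ℝ)
    (Vπstar Vπhat Vbstar Vbhat : X → ℝ)
    (hVπstar : ∀ x, Vπstar x = ∑ a, π x a * Qπstar x a)
    (hQπstar : ∀ x a, Qπstar x a = Rstar x a + γ * ∑ x', Pstar x a x' * Vπstar x')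
    (hVπhat : ∀ x, Vπhat x = ∑ a, π x a * Qπhat x a)
    (hQπhat : ∀ x a, Qπhat x a = Rhat x a + γ * ∑ x', Phat x a x' * Vπhat x')
    (hVbstar : ∀ x, Vbstar x = ∑ a, πb x a * Qbstar x a)
    (hQbstar : ∀ x a, Qbstar x a = Rstar x a + γ * ∑ x', Pstar x a x' * Vbstar x')
    (hVbhat : ∀ x, Vbhat x = ∑ a, πb x a * Qbhat x a)
    (hQbhat : ∀ x a, Qbhat x a = Rhat x a + γ * ∑ x', Phat x a x' * Vbhat x')
    (hQπhatB : ∀ x a, |Qπhat x a| ≤ Vmax)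
    -- discounted visitation matrices of π_b in M* and in M̂
    (dstar dhat : Matrix X X ℝ)
    (hdstar : dstar = (1 - γ • (Matrix.of fun x x' => ∑ a, πb x a * Pstar x a x'))⁻¹)
    (hdhat : dhat = (1 - γ • (Matrix.of fun x x' => ∑ a, πb x a * Phat x a x'))⁻¹) :
    ∀ x, Vπstar x - Vbstar x ≥
      Vπhat x - Vbhat x
      - 2 * (∑ x', |dstar x x' - dhat x x'|) * Vmax
      - ((1 + γ) / ((1 - γ) ^ 2 * (1 - κ * γ))) * ε * Vmax := by
  intro x9
  haveI : Nonempty X := ⟨x9⟩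
  rcases isEmpty_or_nonempty A with hae | hae
  · exact absurd (hπsum x9) (by simp)
  have h1γ : (0:ℝ) < 1 - γ := by linarith
  have h1κγ : (0:ℝ) < 1 - κ * γ := by linarith
  have hV0 : 0 ≤ Vmax := le_trans (div_nonneg hRmax h1γ.le) hVmax
  have hRV : Rmax ≤ (1 - γ) * Vmax := by
    rw [div_le_iff₀ h1γ] at hVmax; linarith
  set c1 : ℝ := Vmax / (1 - κ * γ) with hc1def
  have hc10 : 0 ≤ c1 := div_nonneg hV0 h1κγ.le
  have hc1e : c1 * (1 - κ * γ) = Vmax := div_mul_cancel₀ Vmax (ne_of_gt h1κγ)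
  set c2 : ℝ := γ * c1 / (1 - γ) with hc2def
  have hc20 : 0 ≤ c2 := div_nonneg (mul_nonneg hγ0 hc10) h1γ.le
  -- |Vπhat| ≤ Vmax
  have hVπhatB : ∀ x, |Vπhat x| ≤ Vmax := by
    intro x
    rw [hVπhat x]
    calc |∑ a, π x a * Qπhat x a| ≤ ∑ a, |π x a * Qπhat x a| :=
          Finset.abs_sum_le_sum_abs _ _
      _ ≤ ∑ a, π x a * Vmax := by
          apply Finset.sum_le_sum; intro a _
          rw [abs_mul, abs_of_nonneg (hπnn x a)]
          exact mul_le_mul_of_nonneg_left (hQπhatB x a) (hπnn x a)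
      _ = Vmax := by rw [← Finset.sum_mul, hπsum x, one_mul]
  -- one-step expansion bound on the Q-error
  have hEstep : ∀ x a, |Qπstar x a - Qπhat x a| ≤
      eP x a * Vmax + γ * ∑ x', Pstar x a x' * |Vπstar x' - Vπhat x'| := by
    intro x a
    have hexp : Qπstar x a - Qπhat x a = (Rstar x a - Rhat x a)
        + γ * ((∑ x', (Pstar x a x' - Phat x a x') * Vπhat x')
          + ∑ x', Pstar x a x' * (Vπstar x' - Vπhat x')) := by
      have h1 : (∑ x', (Pstar x a x' - Phat x a x') * Vπhat x')
          + ∑ x', Pstar x a x' * (Vπstar x' - Vπhat x')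
          = ∑ x', Pstar x a x' * Vπstar x' - ∑ x', Phat x a x' * Vπhat x' := by
        rw [← Finset.sum_add_distrib, ← Finset.sum_sub_distrib]
        exact Finset.sum_congr rfl fun x' _ => by ring
      rw [hQπstar x a, hQπhat x a, h1]; ring
    have hT1 : |∑ x', (Pstar x a x' - Phat x a x') * Vπhat x'| ≤ eP x a * Vmax := by
      calc |∑ x', (Pstar x a x' - Phat x a x') * Vπhat x'|
          ≤ ∑ x', |(Pstar x a x' - Phat x a x') * Vπhat x'| := Finset.abs_sum_le_sum_abs _ _
        _ ≤ ∑ x', |Pstar x a x' - Phat x a x'| * Vmax := by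
            apply Finset.sum_le_sum; intro x' _
            rw [abs_mul]
            exact mul_le_mul_of_nonneg_left (hVπhatB x') (abs_nonneg _)
        _ = (∑ x', |Pstar x a x' - Phat x a x'|) * Vmax := by rw [Finset.sum_mul]
        _ ≤ eP x a * Vmax := mul_le_mul_of_nonneg_right (hPerr x a) hV0
    have hT2 : |∑ x', Pstar x a x' * (Vπstar x' - Vπhat x')|
        ≤ ∑ x', Pstar x a x' * |Vπstar x' - Vπhat x'| := by
      calc |∑ x', Pstar x a x' * (Vπstar x' - Vπhat x')|
          ≤ ∑ x', |Pstar x a x' * (Vπstar x' - Vπhat x')| := Finset.abs_sum_le_sum_abs _ _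
        _ = ∑ x', Pstar x a x' * |Vπstar x' - Vπhat x'| := by
            apply Finset.sum_congr rfl; intro x' _
            rw [abs_mul, abs_of_nonneg (hPsnn x a x')]
    have hTR : |Rstar x a - Rhat x a| ≤ eP x a * ((1 - γ) * Vmax) :=
      le_trans (hRerr x a) (mul_le_mul_of_nonneg_left hRV (heP x a))
    have habs : |Qπstar x a - Qπhat x a| ≤ |Rstar x a - Rhat x a|
        + γ * (|∑ x', (Pstar x a x' - Phat x a x') * Vπhat x'|
          + |∑ x', Pstar x a x' * (Vπstar x' - Vπhat x')|) := by
      rw [hexp]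
      calc |(Rstar x a - Rhat x a) + γ * ((∑ x', (Pstar x a x' - Phat x a x') * Vπhat x')
            + ∑ x', Pstar x a x' * (Vπstar x' - Vπhat x'))|
          ≤ |Rstar x a - Rhat x a| + |γ * ((∑ x', (Pstar x a x' - Phat x a x') * Vπhat x')
            + ∑ x', Pstar x a x' * (Vπstar x' - Vπhat x'))| := abs_add_le _ _
        _ ≤ |Rstar x a - Rhat x a| + γ * (|∑ x', (Pstar x a x' - Phat x a x') * Vπhat x'|
            + |∑ x', Pstar x a x' * (Vπstar x' - Vπhat x')|) := by
            rw [abs_mul, abs_of_nonneg hγ0]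
            have := abs_add_le (∑ x', (Pstar x a x' - Phat x a x') * Vπhat x')
              (∑ x', Pstar x a x' * (Vπstar x' - Vπhat x'))
            nlinarith [abs_nonneg ((∑ x', (Pstar x a x' - Phat x a x') * Vπhat x')
              + ∑ x', Pstar x a x' * (Vπstar x' - Vπhat x'))]
    have h5 := mul_le_mul_of_nonneg_left (add_le_add hT1 hT2) hγ0
    have hr : eP x a * ((1 - γ) * Vmax)
        + γ * (eP x a * Vmax + ∑ x', Pstar x a x' * |Vπstar x' - Vπhat x'|)
        = eP x a * Vmax + γ * ∑ x', Pstar x a x' * |Vπstar x' - Vπhat x'| := by ring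
    linarith [habs, hTR, h5]
  -- the sup of the Q-error minus c1 * eP
  haveI : Nonempty (X × A) := ⟨(x9, Classical.arbitrary A)⟩
  have hneXA : (Finset.univ : Finset (X × A)).Nonempty := Finset.univ_nonempty
  set S : ℝ := Finset.sup' Finset.univ hneXA
    (fun p : X × A => |Qπstar p.1 p.2 - Qπhat p.1 p.2| - c1 * eP p.1 p.2) with hSdef
  have hES : ∀ x a, |Qπstar x a - Qπhat x a| ≤ c1 * eP x a + S := by
    intro x a
    have h := Finset.le_sup'
      (fun p : X × A => |Qπstar p.1 p.2 - Qπhat p.1 p.2| - c1 * eP p.1 p.2)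
      (Finset.mem_univ (x, a))
    rw [← hSdef] at h
    simp only at h
    linarith
  have hD : ∀ x, |Vπstar x - Vπhat x|
      ≤ c1 * (∑ a, πb x a * eP x a) + (c1 * ε + S) := by
    intro x
    have h1 : |Vπstar x - Vπhat x| ≤ ∑ a, π x a * |Qπstar x a - Qπhat x a| := by
      rw [hVπstar x, hVπhat x, ← Finset.sum_sub_distrib]
      calc |∑ a, (π x a * Qπstar x a - π x a * Qπhat x a)|
          ≤ ∑ a, |π x a * Qπstar x a - π x a * Qπhat x a| := Finset.abs_sum_le_sum_abs _ _
        _ = ∑ a, π x a * |Qπstar x a - Qπhat x a| := by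
            apply Finset.sum_congr rfl; intro a _
            rw [← mul_sub, abs_mul, abs_of_nonneg (hπnn x a)]
    have h2 : ∑ a, π x a * |Qπstar x a - Qπhat x a| ≤ ∑ a, π x a * (c1 * eP x a + S) :=
      Finset.sum_le_sum fun a _ => mul_le_mul_of_nonneg_left (hES x a) (hπnn x a)
    have h3 : ∑ a, π x a * (c1 * eP x a + S) = c1 * (∑ a, π x a * eP x a) + S := by
      calc ∑ a, π x a * (c1 * eP x a + S)
          = ∑ a, (c1 * (π x a * eP x a) + π x a * S) :=
            Finset.sum_congr rfl fun a _ => by ring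
        _ = c1 * (∑ a, π x a * eP x a) + (∑ a, π x a) * S := by
            rw [Finset.sum_add_distrib, Finset.mul_sum, Finset.sum_mul]
        _ = c1 * (∑ a, π x a * eP x a) + S := by rw [hπsum x, one_mul]
    have h4 : ∑ a, π x a * eP x a ≤ (∑ a, πb x a * eP x a) + ε := by
      have h5 : ∀ a, π x a * eP x a ≤ πb x a * eP x a + eP x a * |π x a - πb x a| := by
        intro a
        have := le_abs_self (π x a - πb x a)
        nlinarith [heP x a]
      calc ∑ a, π x a * eP x a
          ≤ ∑ a, (πb x a * eP x a + eP x a * |π x a - πb x a|) :=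
            Finset.sum_le_sum fun a _ => h5 a
        _ = (∑ a, πb x a * eP x a) + ∑ a, eP x a * |π x a - πb x a| :=
            Finset.sum_add_distrib
        _ ≤ (∑ a, πb x a * eP x a) + ε := by linarith [hcon x]
    have h6 := mul_le_mul_of_nonneg_left h4 hc10
    have h7 : c1 * ((∑ a, πb x a * eP x a) + ε)
        = c1 * (∑ a, πb x a * eP x a) + c1 * ε := by ring
    linarith [h1, h2]
  -- the smoothness assumption, rearranged
  have hsmooth' : ∀ x a, ∑ x', Pstar x a x' * (∑ a', πb x' a' * eP x' a') ≤ κ * eP x a := by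
    intro x a
    have h : ∑ x', Pstar x a x' * (∑ a', πb x' a' * eP x' a')
        = ∑ x', ∑ a', eP x' a' * πb x' a' * Pstar x a x' := by
      apply Finset.sum_congr rfl; intro x' _
      rw [Finset.mul_sum]
      exact Finset.sum_congr rfl fun a' _ => by ring
    rw [h]; exact hsmooth x a
  -- the fixed-point bound on S
  have hSrec : S ≤ γ * c1 * ε + γ * S := by
    rw [hSdef]
    apply Finset.sup'_le
    rintro ⟨x, a⟩ -
    simp only
    have h1 := hEstep x a
    have h2 : ∑ x', Pstar x a x' * |Vπstar x' - Vπhat x'|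
        ≤ ∑ x', Pstar x a x' * (c1 * (∑ a', πb x' a' * eP x' a') + (c1 * ε + S)) :=
      Finset.sum_le_sum fun x' _ => mul_le_mul_of_nonneg_left (hD x') (hPsnn x a x')
    have h3 : ∑ x', Pstar x a x' * (c1 * (∑ a', πb x' a' * eP x' a') + (c1 * ε + S))
        = c1 * (∑ x', Pstar x a x' * (∑ a', πb x' a' * eP x' a')) + (c1 * ε + S) := by
      calc ∑ x', Pstar x a x' * (c1 * (∑ a', πb x' a' * eP x' a') + (c1 * ε + S))
          = ∑ x', (c1 * (Pstar x a x' * ∑ a', πb x' a' * eP x' a')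
              + Pstar x a x' * (c1 * ε + S)) :=
            Finset.sum_congr rfl fun x' _ => by ring
        _ = c1 * (∑ x', Pstar x a x' * ∑ a', πb x' a' * eP x' a')
            + (∑ x', Pstar x a x') * (c1 * ε + S) := by
            rw [Finset.sum_add_distrib, Finset.mul_sum, Finset.sum_mul]
        _ = _ := by rw [hPssum x a, one_mul]
    have h5 := mul_le_mul_of_nonneg_left (hsmooth' x a) hc10
    have hzero : Vmax + γ * κ * c1 - c1 = 0 := by linear_combination -hc1e
    have hkey : eP x a * Vmax + γ * (c1 * (κ * eP x a) + (c1 * ε + S)) - c1 * eP x a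
        = eP x a * (Vmax + γ * κ * c1 - c1) + (γ * c1 * ε + γ * S) := by ring
    have hz2 : eP x a * (Vmax + γ * κ * c1 - c1) = 0 := by rw [hzero, mul_zero]
    have h7 := mul_le_mul_of_nonneg_left (le_trans h2 (le_of_eq h3)) hγ0
    have h8 := mul_le_mul_of_nonneg_left
      (add_le_add_right h5 (c1 * ε + S)) hγ0
    linarith
  have hS2 : S ≤ c2 * ε := by
    rw [hc2def, div_mul_eq_mul_div, le_div_iff₀ h1γ]
    nlinarith [hSrec]
  have hEfin : ∀ x a, |Qπstar x a - Qπhat x a| ≤ c1 * eP x a + c2 * ε :=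
    fun x a => le_trans (hES x a) (by linarith [hS2])
  -- bounds on the advantage-like functions u, ustar
  have hpppb : ∀ x a, |π x a - πb x a| ≤ π x a + πb x a := by
    intro x a
    rw [abs_le]
    constructor
    · have := hπnn x a; have := hπbnn x a; linarith
    · have := hπnn x a; have := hπbnn x a; linarith
  have hsum2 : ∀ x, ∑ a, (π x a + πb x a) = 2 := by
    intro x
    rw [Finset.sum_add_distrib, hπsum x, hπbsum x]; norm_num
  have hu : ∀ x, |∑ a, (π x a - πb x a) * Qπhat x a| ≤ 2 * Vmax := by
    intro x
    calc |∑ a, (π x a - πb x a) * Qπhat x a|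
        ≤ ∑ a, |(π x a - πb x a) * Qπhat x a| := Finset.abs_sum_le_sum_abs _ _
      _ ≤ ∑ a, (π x a + πb x a) * Vmax := by
          apply Finset.sum_le_sum; intro a _
          rw [abs_mul]
          exact mul_le_mul (hpppb x a) (hQπhatB x a) (abs_nonneg _)
            (by have := hπnn x a; have := hπbnn x a; linarith)
      _ = 2 * Vmax := by rw [← Finset.sum_mul, hsum2 x]
  have hud : ∀ x, |(∑ a, (π x a - πb x a) * Qπstar x a)
      - ∑ a, (π x a - πb x a) * Qπhat x a| ≤ (c1 + 2 * c2) * ε := by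
    intro x
    rw [← Finset.sum_sub_distrib]
    calc |∑ a, ((π x a - πb x a) * Qπstar x a - (π x a - πb x a) * Qπhat x a)|
        ≤ ∑ a, |(π x a - πb x a) * Qπstar x a - (π x a - πb x a) * Qπhat x a| :=
          Finset.abs_sum_le_sum_abs _ _
      _ = ∑ a, |π x a - πb x a| * |Qπstar x a - Qπhat x a| := by
          apply Finset.sum_congr rfl; intro a _
          rw [← mul_sub, abs_mul]
      _ ≤ ∑ a, (c1 * (eP x a * |π x a - πb x a|) + c2 * ε * (π x a + πb x a)) := by
          apply Finset.sum_le_sum; intro a _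
          have h3 : |π x a - πb x a| * |Qπstar x a - Qπhat x a|
              ≤ |π x a - πb x a| * (c1 * eP x a + c2 * ε) :=
            mul_le_mul_of_nonneg_left (hEfin x a) (abs_nonneg _)
          have h4 := mul_le_mul_of_nonneg_left (hpppb x a) (mul_nonneg hc20 hε)
          nlinarith [h3, h4]
      _ = c1 * (∑ a, eP x a * |π x a - πb x a|) + c2 * ε * (∑ a, (π x a + πb x a)) := by
          rw [Finset.sum_add_distrib, ← Finset.mul_sum, ← Finset.mul_sum]
      _ ≤ (c1 + 2 * c2) * ε := by
          rw [hsum2 x]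
          have := mul_le_mul_of_nonneg_left (hcon x) hc10
          nlinarith
  -- matrix setup
  set Ms : Matrix X X ℝ := Matrix.of fun x x' => ∑ a, πb x a * Pstar x a x' with hMsdef
  set Mh : Matrix X X ℝ := Matrix.of fun x x' => ∑ a, πb x a * Phat x a x' with hMhdef
  have hMs0 : ∀ x y, 0 ≤ Ms x y := by
    intro x y
    rw [hMsdef]
    simp only [Matrix.of_apply]
    exact Finset.sum_nonneg fun a _ => mul_nonneg (hπbnn x a) (hPsnn x a y)
  have hMh0 : ∀ x y, 0 ≤ Mh x y := by
    intro x y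
    rw [hMhdef]
    simp only [Matrix.of_apply]
    exact Finset.sum_nonneg fun a _ => mul_nonneg (hπbnn x a) (hPhnn x a y)
  have hMs1 : ∀ x, ∑ y, Ms x y = 1 := by
    intro x
    rw [hMsdef]
    simp only [Matrix.of_apply]
    rw [Finset.sum_comm]
    calc ∑ a, ∑ y, πb x a * Pstar x a y = ∑ a, πb x a * ∑ y, Pstar x a y :=
          Finset.sum_congr rfl fun a _ => (Finset.mul_sum _ _ _).symm
      _ = 1 := by
          rw [Finset.sum_congr rfl fun a _ => by rw [hPssum x a, mul_one]]
          exact hπbsum x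
  have hMh1 : ∀ x, ∑ y, Mh x y = 1 := by
    intro x
    rw [hMhdef]
    simp only [Matrix.of_apply]
    rw [Finset.sum_comm]
    calc ∑ a, ∑ y, πb x a * Phat x a y = ∑ a, πb x a * ∑ y, Phat x a y :=
          Finset.sum_congr rfl fun a _ => (Finset.mul_sum _ _ _).symm
      _ = 1 := by
          rw [Finset.sum_congr rfl fun a _ => by rw [hPhsum x a, mul_one]]
          exact hπbsum x
  obtain ⟨hinvS, hposS, hrowS⟩ := stoch_inv_facts γ hγ0 hγ1 Ms hMs0 hMs1
  obtain ⟨hinvH, hposH, hrowH⟩ := stoch_inv_facts γ hγ0 hγ1 Mh hMh0 hMh1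
  rw [← hdstar] at hinvS hposS hrowS
  rw [← hdhat] at hinvH hposH hrowH
  -- Bellman identity for the value gap in M*
  have hkeyQs : ∀ x a, Qπstar x a - Qbstar x a
      = γ * ∑ x', Pstar x a x' * (Vπstar x' - Vbstar x') := by
    intro x a
    have h1 : ∑ x', Pstar x a x' * (Vπstar x' - Vbstar x')
        = ∑ x', Pstar x a x' * Vπstar x' - ∑ x', Pstar x a x' * Vbstar x' := by
      rw [← Finset.sum_sub_distrib]
      exact Finset.sum_congr rfl fun x' _ => by ring
    rw [hQπstar x a, hQbstar x a, h1]; ring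
  have hkeyQh : ∀ x a, Qπhat x a - Qbhat x a
      = γ * ∑ x', Phat x a x' * (Vπhat x' - Vbhat x') := by
    intro x a
    have h1 : ∑ x', Phat x a x' * (Vπhat x' - Vbhat x')
        = ∑ x', Phat x a x' * Vπhat x' - ∑ x', Phat x a x' * Vbhat x' := by
      rw [← Finset.sum_sub_distrib]
      exact Finset.sum_congr rfl fun x' _ => by ring
    rw [hQπhat x a, hQbhat x a, h1]; ring
  have hW : ∀ x, Vπstar x - Vbstar x = (∑ a, (π x a - πb x a) * Qπstar x a)
      + γ * ∑ x', Ms x x' * (Vπstar x' - Vbstar x') := by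
    intro x
    have h1 : ∑ a, πb x a * (Qπstar x a - Qbstar x a)
        = γ * ∑ x', Ms x x' * (Vπstar x' - Vbstar x') := by
      calc ∑ a, πb x a * (Qπstar x a - Qbstar x a)
          = ∑ a, πb x a * (γ * ∑ x', Pstar x a x' * (Vπstar x' - Vbstar x')) :=
            Finset.sum_congr rfl fun a _ => by rw [hkeyQs x a]
        _ = γ * ∑ a, ∑ x', πb x a * Pstar x a x' * (Vπstar x' - Vbstar x') := by
            rw [Finset.mul_sum]
            refine Finset.sum_congr rfl fun a _ => ?_
            have h2 : ∑ x', πb x a * Pstar x a x' * (Vπstar x' - Vbstar x')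
                = πb x a * ∑ x', Pstar x a x' * (Vπstar x' - Vbstar x') := by
              rw [Finset.mul_sum]
              exact Finset.sum_congr rfl fun x' _ => by ring
            rw [h2]; ring
        _ = γ * ∑ x', Ms x x' * (Vπstar x' - Vbstar x') := by
            congr 1
            rw [Finset.sum_comm]
            refine Finset.sum_congr rfl fun x' _ => ?_
            rw [hMsdef]
            simp only [Matrix.of_apply]
            rw [Finset.sum_mul]
    have h2 : Vπstar x - Vbstar x = (∑ a, (π x a - πb x a) * Qπstar x a)
        + ∑ a, πb x a * (Qπstar x a - Qbstar x a) := by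
      rw [hVπstar x, hVbstar x, ← Finset.sum_add_distrib, ← Finset.sum_sub_distrib]
      exact Finset.sum_congr rfl fun a _ => by ring
    rw [h2, h1]
  have hWh : ∀ x, Vπhat x - Vbhat x = (∑ a, (π x a - πb x a) * Qπhat x a)
      + γ * ∑ x', Mh x x' * (Vπhat x' - Vbhat x') := by
    intro x
    have h1 : ∑ a, πb x a * (Qπhat x a - Qbhat x a)
        = γ * ∑ x', Mh x x' * (Vπhat x' - Vbhat x') := by
      calc ∑ a, πb x a * (Qπhat x a - Qbhat x a)
          = ∑ a, πb x a * (γ * ∑ x', Phat x a x' * (Vπhat x' - Vbhat x')) :=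
            Finset.sum_congr rfl fun a _ => by rw [hkeyQh x a]
        _ = γ * ∑ a, ∑ x', πb x a * Phat x a x' * (Vπhat x' - Vbhat x') := by
            rw [Finset.mul_sum]
            refine Finset.sum_congr rfl fun a _ => ?_
            have h2 : ∑ x', πb x a * Phat x a x' * (Vπhat x' - Vbhat x')
                = πb x a * ∑ x', Phat x a x' * (Vπhat x' - Vbhat x') := by
              rw [Finset.mul_sum]
              exact Finset.sum_congr rfl fun x' _ => by ring
            rw [h2]; ring
        _ = γ * ∑ x', Mh x x' * (Vπhat x' - Vbhat x') := by
            congr 1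
            rw [Finset.sum_comm]
            refine Finset.sum_congr rfl fun x' _ => ?_
            rw [hMhdef]
            simp only [Matrix.of_apply]
            rw [Finset.sum_mul]
    have h2 : Vπhat x - Vbhat x = (∑ a, (π x a - πb x a) * Qπhat x a)
        + ∑ a, πb x a * (Qπhat x a - Qbhat x a) := by
      rw [hVπhat x, hVbhat x, ← Finset.sum_add_distrib, ← Finset.sum_sub_distrib]
      exact Finset.sum_congr rfl fun a _ => by ring
    rw [h2, h1]
  -- invert the Bellman identities using the visitation matrices
  have hdW : ∀ x, Vπstar x - Vbstar x
      = ∑ x', dstar x x' * (∑ a, (π x' a - πb x' a) * Qπstar x' a) := by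
    intro x
    have hAW : ∀ z, ∑ x', ((1 : Matrix X X ℝ) - γ • Ms) z x' * (Vπstar x' - Vbstar x')
        = ∑ a, (π z a - πb z a) * Qπstar z a := by
      intro z
      have h1 : ∀ x', ((1 : Matrix X X ℝ) - γ • Ms) z x' * (Vπstar x' - Vbstar x')
          = (if z = x' then (Vπstar x' - Vbstar x') else 0)
            - γ * (Ms z x' * (Vπstar x' - Vbstar x')) := by
        intro x'
        simp only [Matrix.sub_apply, Matrix.smul_apply, Matrix.one_apply, smul_eq_mul]
        split <;> ring
      rw [Finset.sum_congr rfl fun x' _ => h1 x', Finset.sum_sub_distrib,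
        Finset.sum_ite_eq, ← Finset.mul_sum]
      simp only [Finset.mem_univ, if_true]
      linarith [hW z]
    calc Vπstar x - Vbstar x
        = ∑ x', (1 : Matrix X X ℝ) x x' * (Vπstar x' - Vbstar x') := by
          rw [Finset.sum_congr rfl fun x' (_ : x' ∈ Finset.univ) =>
            (by rw [Matrix.one_apply]; split <;> ring :
              (1 : Matrix X X ℝ) x x' * (Vπstar x' - Vbstar x')
                = if x = x' then (Vπstar x' - Vbstar x') else 0)]
          rw [Finset.sum_ite_eq]
          simp
      _ = ∑ x', (dstar * ((1 : Matrix X X ℝ) - γ • Ms)) x x' * (Vπstar x' - Vbstar x') := by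
          rw [hinvS]
      _ = ∑ z, dstar x z * (∑ x', ((1 : Matrix X X ℝ) - γ • Ms) z x' * (Vπstar x' - Vbstar x')) := by
          have h2 : ∀ x', (dstar * ((1 : Matrix X X ℝ) - γ • Ms)) x x' * (Vπstar x' - Vbstar x')
              = ∑ z, dstar x z * (((1 : Matrix X X ℝ) - γ • Ms) z x' * (Vπstar x' - Vbstar x')) := by
            intro x'
            rw [Matrix.mul_apply, Finset.sum_mul]
            exact Finset.sum_congr rfl fun z _ => by ring
          rw [Finset.sum_congr rfl fun x' _ => h2 x', Finset.sum_comm]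
          exact Finset.sum_congr rfl fun z _ => (Finset.mul_sum _ _ _).symm
      _ = ∑ x', dstar x x' * (∑ a, (π x' a - πb x' a) * Qπstar x' a) :=
          Finset.sum_congr rfl fun z _ => by rw [hAW z]
  have hdWh : ∀ x, Vπhat x - Vbhat x
      = ∑ x', dhat x x' * (∑ a, (π x' a - πb x' a) * Qπhat x' a) := by
    intro x
    have hAW : ∀ z, ∑ x', ((1 : Matrix X X ℝ) - γ • Mh) z x' * (Vπhat x' - Vbhat x')
        = ∑ a, (π z a - πb z a) * Qπhat z a := by
      intro z
      have h1 : ∀ x', ((1 : Matrix X X ℝ) - γ • Mh) z x' * (Vπhat x' - Vbhat x')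
          = (if z = x' then (Vπhat x' - Vbhat x') else 0)
            - γ * (Mh z x' * (Vπhat x' - Vbhat x')) := by
        intro x'
        simp only [Matrix.sub_apply, Matrix.smul_apply, Matrix.one_apply, smul_eq_mul]
        split <;> ring
      rw [Finset.sum_congr rfl fun x' _ => h1 x', Finset.sum_sub_distrib,
        Finset.sum_ite_eq, ← Finset.mul_sum]
      simp only [Finset.mem_univ, if_true]
      linarith [hWh z]
    calc Vπhat x - Vbhat x
        = ∑ x', (1 : Matrix X X ℝ) x x' * (Vπhat x' - Vbhat x') := by
          rw [Finset.sum_congr rfl fun x' (_ : x' ∈ Finset.univ) =>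
            (by rw [Matrix.one_apply]; split <;> ring :
              (1 : Matrix X X ℝ) x x' * (Vπhat x' - Vbhat x')
                = if x = x' then (Vπhat x' - Vbhat x') else 0)]
          rw [Finset.sum_ite_eq]
          simp
      _ = ∑ x', (dhat * ((1 : Matrix X X ℝ) - γ • Mh)) x x' * (Vπhat x' - Vbhat x') := by
          rw [hinvH]
      _ = ∑ z, dhat x z * (∑ x', ((1 : Matrix X X ℝ) - γ • Mh) z x' * (Vπhat x' - Vbhat x')) := by
          have h2 : ∀ x', (dhat * ((1 : Matrix X X ℝ) - γ • Mh)) x x' * (Vπhat x' - Vbhat x')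
              = ∑ z, dhat x z * (((1 : Matrix X X ℝ) - γ • Mh) z x' * (Vπhat x' - Vbhat x')) := by
            intro x'
            rw [Matrix.mul_apply, Finset.sum_mul]
            exact Finset.sum_congr rfl fun z _ => by ring
          rw [Finset.sum_congr rfl fun x' _ => h2 x', Finset.sum_comm]
          exact Finset.sum_congr rfl fun z _ => (Finset.mul_sum _ _ _).symm
      _ = ∑ x', dhat x x' * (∑ a, (π x' a - πb x' a) * Qπhat x' a) :=
          Finset.sum_congr rfl fun z _ => by rw [hAW z]
  -- final assembly
  have e1 := hdW x9
  have e2 := hdWh x9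
  have b1 : ∑ x', dstar x9 x' * (∑ a, (π x' a - πb x' a) * Qπstar x' a)
      ≥ (∑ x', dstar x9 x' * (∑ a, (π x' a - πb x' a) * Qπhat x' a))
        - ((c1 + 2 * c2) * ε) / (1 - γ) := by
    have h1 : ∀ x', dstar x9 x' * (∑ a, (π x' a - πb x' a) * Qπstar x' a)
        - dstar x9 x' * (∑ a, (π x' a - πb x' a) * Qπhat x' a)
        ≥ dstar x9 x' * (-((c1 + 2 * c2) * ε)) := by
      intro x'
      rw [← mul_sub]
      apply mul_le_mul_of_nonneg_left _ (hposS x9 x')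
      have h2 := hud x'
      have h3 := neg_abs_le ((∑ a, (π x' a - πb x' a) * Qπstar x' a)
        - ∑ a, (π x' a - πb x' a) * Qπhat x' a)
      linarith
    have h4 : ∑ x', (dstar x9 x' * (∑ a, (π x' a - πb x' a) * Qπstar x' a)
        - dstar x9 x' * (∑ a, (π x' a - πb x' a) * Qπhat x' a))
        ≥ ∑ x', dstar x9 x' * (-((c1 + 2 * c2) * ε)) :=
      Finset.sum_le_sum fun x' _ => h1 x'
    rw [Finset.sum_sub_distrib] at h4
    have h5 : ∑ x', dstar x9 x' * (-((c1 + 2 * c2) * ε))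
        = -(((c1 + 2 * c2) * ε) / (1 - γ)) := by
      rw [← Finset.sum_mul, hrowS x9]
      field_simp
    rw [h5] at h4
    linarith
  have b2 : ∑ x', dstar x9 x' * (∑ a, (π x' a - πb x' a) * Qπhat x' a)
      ≥ (∑ x', dhat x9 x' * (∑ a, (π x' a - πb x' a) * Qπhat x' a))
        - 2 * (∑ x', |dstar x9 x' - dhat x9 x'|) * Vmax := by
    have h1 : ∀ x', dstar x9 x' * (∑ a, (π x' a - πb x' a) * Qπhat x' a)
        - dhat x9 x' * (∑ a, (π x' a - πb x' a) * Qπhat x' a)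
        ≥ -(|dstar x9 x' - dhat x9 x'| * (2 * Vmax)) := by
      intro x'
      rw [← sub_mul]
      have h2 : |(dstar x9 x' - dhat x9 x') * (∑ a, (π x' a - πb x' a) * Qπhat x' a)|
          ≤ |dstar x9 x' - dhat x9 x'| * (2 * Vmax) := by
        rw [abs_mul]
        exact mul_le_mul_of_nonneg_left (hu x') (abs_nonneg _)
      have h3 := neg_abs_le ((dstar x9 x' - dhat x9 x')
        * (∑ a, (π x' a - πb x' a) * Qπhat x' a))
      linarith
    have h4 : ∑ x', (dstar x9 x' * (∑ a, (π x' a - πb x' a) * Qπhat x' a)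
        - dhat x9 x' * (∑ a, (π x' a - πb x' a) * Qπhat x' a))
        ≥ ∑ x', -(|dstar x9 x' - dhat x9 x'| * (2 * Vmax)) :=
      Finset.sum_le_sum fun x' _ => h1 x'
    rw [Finset.sum_sub_distrib, Finset.sum_neg_distrib] at h4
    rw [← Finset.sum_mul] at h4
    linarith
  have hCeq : ((1 + γ) / ((1 - γ) ^ 2 * (1 - κ * γ))) * ε * Vmax
      = ((c1 + 2 * c2) * ε) / (1 - γ) := by
    rw [hc2def, hc1def]
    field_simp
    ring
  rw [ge_iff_le]
  linarith [e1, e2, b1, b2]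
end

section
/- Let X,A be finite sets, d: X → ℝ≥0 with Σ_{x'} d(x') ≤ 1/(1-γ), and suppose for all (x',a'): |Q₁(x',a') - Q₂(x',a')| ≤ (e_P(x',a')/(1-κγ) + γε/((1-γ)(1-κγ)))V_max, and π, π_b are probability distributions over A at each state with Σ_{a'} e_P(x',a')|π(a'|x') - π_b(a'|x')| ≤ ε. Then |Σ_{x'} d(x')Σ_{a'}(Q₁(x',a') - Q₂(x',a'))(π(a'|x') - π_b(a'|x'))| ≤ ((1+γ)/((1-γ)²(1-κγ)))εV_max. -/
open Finset

/-! The ℓ¹ distance of two distributions is at most 2, so the bias term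
`γ ε / ((1 - γ)(1 - κγ)) V_max` of the error bound contributes at most twice itself, while the
`e_P`-weighted term is controlled by the constraint `∑ e_P |π - π_b| ≤ ε`. Averaging over `d`
multiplies by at most `1 / (1 - γ)`. -/

theorem sum_abs_sub_le_two_of_sum_eq_one {A : Type*} [Fintype A] {p q : A → ℝ}
    (hp : ∀ a, 0 ≤ p a) (hq : ∀ a, 0 ≤ q a) (hp1 : ∑ a, p a = 1) (hq1 : ∑ a, q a = 1) :
    ∑ a, |p a - q a| ≤ 2 :=
  calc ∑ a, |p a - q a| ≤ ∑ a, (p a + q a) := by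
        gcongr with a
        rw [abs_sub_le_iff]
        constructor <;> linarith [hp a, hq a]
    _ = 2 := by rw [sum_add_distrib, hp1, hq1]; norm_num

theorem abs_sum_mul_le_of_abs_le_affine {A : Type*} [Fintype A] {f g e : A → ℝ}
    {α β ε : ℝ} (hα : 0 ≤ α) (hβ : 0 ≤ β) (hf : ∀ a, |f a| ≤ α * e a + β)
    (he : ∑ a, e a * |g a| ≤ ε) (hg : ∑ a, |g a| ≤ 2) :
    |∑ a, f a * g a| ≤ α * ε + 2 * β :=
  calc |∑ a, f a * g a| ≤ ∑ a, |f a| * |g a| := by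
        simpa only [abs_mul] using abs_sum_le_sum_abs (fun a ↦ f a * g a) univ
    _ ≤ ∑ a, (α * e a + β) * |g a| := by
        gcongr with a
        exact hf a
    _ = α * ∑ a, e a * |g a| + β * ∑ a, |g a| := by
        simp only [mul_sum, ← sum_add_distrib]
        exact sum_congr rfl fun a _ ↦ by ring
    _ ≤ α * ε + 2 * β := by
        linarith [mul_le_mul_of_nonneg_left he hα, mul_le_mul_of_nonneg_left hg hβ]

theorem abs_sum_mul_le_of_sum_le {X : Type*} [Fintype X] {d F : X → ℝ} {D C : ℝ}
    (hd : ∀ x, 0 ≤ d x) (hdD : ∑ x, d x ≤ D) (hC : 0 ≤ C) (hF : ∀ x, |F x| ≤ C) :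
    |∑ x, d x * F x| ≤ D * C :=
  calc |∑ x, d x * F x| ≤ ∑ x, d x * |F x| := by
        simpa only [abs_mul, abs_of_nonneg (hd _)] using abs_sum_le_sum_abs (fun x ↦ d x * F x) univ
    _ ≤ ∑ x, d x * C := by
        gcongr with x
        · exact hd x
        · exact hF x
    _ = (∑ x, d x) * C := by rw [sum_mul]
    _ ≤ D * C := by gcongr

theorem soft_spibb_third_term_bound_general
    {X A : Type*} [Fintype X] [Fintype A]
    (γ κ ε Vmax : ℝ)
    (hγ0 : 0 ≤ γ) (hγ1 : γ < 1) (hκγ : κ * γ < 1)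
    (hε : 0 ≤ ε) (hVmax : 0 ≤ Vmax)
    (d : X → ℝ) (hdnn : ∀ x', 0 ≤ d x')
    (hdsum : ∑ x', d x' ≤ 1 / (1 - γ))
    (Q₁ Q₂ : X → A → ℝ) (eP : X → A → ℝ)
    (hQerr : ∀ x' a', |Q₁ x' a' - Q₂ x' a'| ≤
      (eP x' a' / (1 - κ * γ) + γ * ε / ((1 - γ) * (1 - κ * γ))) * Vmax)
    (π πb : X → A → ℝ)
    (hπnn : ∀ x a, 0 ≤ π x a) (hπsum : ∀ x, ∑ a, π x a = 1)
    (hπbnn : ∀ x a, 0 ≤ πb x a) (hπbsum : ∀ x, ∑ a, πb x a = 1)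
    (hcon : ∀ x', ∑ a', eP x' a' * |π x' a' - πb x' a'| ≤ ε) :
    |∑ x', d x' * ∑ a', (Q₁ x' a' - Q₂ x' a') * (π x' a' - πb x' a')| ≤
      ((1 + γ) / ((1 - γ) ^ 2 * (1 - κ * γ))) * ε * Vmax := by
  have h1γ : 0 < 1 - γ := by linarith
  have h1κγ : 0 < 1 - κ * γ := by linarith
  set α := Vmax / (1 - κ * γ)
  set β := γ * ε / ((1 - γ) * (1 - κ * γ)) * Vmax
  have hstate : ∀ x, |∑ a, (Q₁ x a - Q₂ x a) * (π x a - πb x a)| ≤ α * ε + 2 * β := fun x ↦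
    abs_sum_mul_le_of_abs_le_affine (by positivity) (by positivity)
      (fun a ↦ (hQerr x a).trans_eq (by ring)) (hcon x)
      (sum_abs_sub_le_two_of_sum_eq_one (hπnn x) (hπbnn x) (hπsum x) (hπbsum x))
  calc _ ≤ 1 / (1 - γ) * (α * ε + 2 * β) :=
        abs_sum_mul_le_of_sum_le hdnn hdsum (by positivity) hstate
    _ = ((1 + γ) / ((1 - γ) ^ 2 * (1 - κ * γ))) * ε * Vmax := by
        simp only [α, β]
        field_simp
        ring

/-- Bounding the third term in the proof of Soft-SPIBB's Theorem 2. -/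
theorem soft_spibb_third_term_bound
    {X A : Type*} [Fintype X] [Fintype A]
    (γ κ ε Vmax : ℝ)
    (hγ0 : 0 ≤ γ) (hγ1 : γ < 1) (hκ0 : 0 ≤ κ) (hκγ : κ * γ < 1)
    (hε : 0 ≤ ε) (hVmax : 0 ≤ Vmax)
    (d : X → ℝ) (hdnn : ∀ x', 0 ≤ d x')
    (hdsum : ∑ x', d x' ≤ 1 / (1 - γ))
    (Q₁ Q₂ : X → A → ℝ) (eP : X → A → ℝ) (heP : ∀ x a, 0 ≤ eP x a)
    (hQerr : ∀ x' a', |Q₁ x' a' - Q₂ x' a'| ≤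
      (eP x' a' / (1 - κ * γ) + γ * ε / ((1 - γ) * (1 - κ * γ))) * Vmax)
    (π πb : X → A → ℝ)
    (hπnn : ∀ x a, 0 ≤ π x a) (hπsum : ∀ x, ∑ a, π x a = 1)
    (hπbnn : ∀ x a, 0 ≤ πb x a) (hπbsum : ∀ x, ∑ a, πb x a = 1)
    (hcon : ∀ x', ∑ a', eP x' a' * |π x' a' - πb x' a'| ≤ ε) :
    |∑ x', d x' * ∑ a', (Q₁ x' a' - Q₂ x' a') * (π x' a' - πb x' a')| ≤
      ((1 + γ) / ((1 - γ) ^ 2 * (1 - κ * γ))) * ε * Vmax :=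
  soft_spibb_third_term_bound_general γ κ ε Vmax hγ0 hγ1 hκγ hε hVmax d hdnn hdsum Q₁ Q₂ eP hQerr π
    πb hπnn hπsum hπbnn hπbsum hcon
end

section
/- Under the κ-smoothness assumption with κγ < 1 and the (π_b, e_P, ε)-constraint, the single Bellman induction step holds: if |Q*_t(x,a) − Q̂_t(x,a)| ≤ (e_P(x,a)/(1−κγ) + γε/((1−γ)(1−κγ)))V_max for all (x,a), then applying the respective Bellman operators for π in M* and M̂, the same bound holds for Q*_{t+1} = B*(Q*_t) and Q̂_{t+1} = B̂(Q̂_t), i.e., |Q*_{t+1}(x,a) − Q̂_{t+1}(x,a)| ≤ (e_P(x,a)/(1−κγ) + γε/((1−γ)(1−κγ)))V_max for all (x,a). -/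
/-!
Write `V(x) = ∑ₐ π(a|x) Q(x,a)`, `c = 1 / (1 - κγ)` and `D = γε / ((1 - γ)(1 - κγ))`. The
Bellman difference splits as `(R* - R̂) + γ ∑ (P* - P̂) V̂ + γ ∑ P* (V* - V̂)`. The first two terms
cost `e_P (1 - γ) V_max` and `γ e_P V_max`. In the third, the induction hypothesis averages under
`π` to `c V_max ∑ₐ π e_P + D V_max`; the constraint replaces `π` by `π_b` at a cost `ε`, and
smoothness bounds the `P*`-average of `∑ₐ π_b e_P` by `κ e_P`. The resulting one-step recursion
has the claimed bound as its exact fixed point.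
-/

open Finset

section WeightedSums

variable {ι : Type*} [Fintype ι]

lemma abs_sum_mul_le_sum_mul {w f g : ι → ℝ} (hw : ∀ i, 0 ≤ w i) (hfg : ∀ i, |f i| ≤ g i) :
    |∑ i, w i * f i| ≤ ∑ i, w i * g i :=
  (abs_sum_le_sum_abs _ _).trans <| sum_le_sum fun i _ => by
    rw [abs_mul, abs_of_nonneg (hw i)]
    exact mul_le_mul_of_nonneg_left (hfg i) (hw i)

lemma abs_sum_sub_mul_le {p q f : ι → ℝ} {M : ℝ} (hf : ∀ i, |f i| ≤ M) :
    |∑ i, (p i - q i) * f i| ≤ (∑ i, |p i - q i|) * M := by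
  rw [sum_mul]
  refine (abs_sum_le_sum_abs _ _).trans (sum_le_sum fun i _ => ?_)
  rw [abs_mul]
  exact mul_le_mul_of_nonneg_left (hf i) (abs_nonneg _)

lemma sum_mul_le_of_sum_eq_one {w f : ι → ℝ} {c : ℝ} (hw : ∀ i, 0 ≤ w i)
    (hsum : ∑ i, w i = 1) (hf : ∀ i, f i ≤ c) : ∑ i, w i * f i ≤ c :=
  calc ∑ i, w i * f i ≤ ∑ i, w i * c :=
        sum_le_sum fun i _ => mul_le_mul_of_nonneg_left (hf i) (hw i)
    _ = c := by rw [← sum_mul, hsum, one_mul]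

lemma sum_mul_add_const {w f : ι → ℝ} (hsum : ∑ i, w i = 1) (α β : ℝ) :
    ∑ i, w i * (α * f i + β) = α * ∑ i, w i * f i + β := by
  simp only [mul_add, sum_add_distrib, ← sum_mul, hsum, one_mul, mul_sum, mul_left_comm α]

end WeightedSums

section Bellman

variable {X A : Type*} [Fintype A]

def policyValue (π Q : X → A → ℝ) (x : X) : ℝ := ∑ a, π x a * Q x a

def bellman [Fintype X] (R : X → A → ℝ) (P : X → A → X → ℝ) (γ : ℝ) (π Q : X → A → ℝ)
    (x : X) (a : A) : ℝ :=
  R x a + γ * ∑ x', P x a x' * policyValue π Q x'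

variable {π : X → A → ℝ} {x : X}

lemma abs_policyValue_le {Q : X → A → ℝ} {V : ℝ} (hπ : ∀ a, 0 ≤ π x a) (hπsum : ∑ a, π x a = 1)
    (hQ : ∀ a, |Q x a| ≤ V) : |policyValue π Q x| ≤ V :=
  (abs_sum_mul_le_sum_mul hπ hQ).trans_eq <| by rw [← sum_mul, hπsum, one_mul]

lemma abs_policyValue_sub_le {Qs Qh e : X → A → ℝ} {α β : ℝ} (hπ : ∀ a, 0 ≤ π x a)
    (hπsum : ∑ a, π x a = 1) (hQ : ∀ a, |Qs x a - Qh x a| ≤ α * e x a + β) :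
    |policyValue π Qs x - policyValue π Qh x| ≤ α * policyValue π e x + β := by
  have hsub : policyValue π Qs x - policyValue π Qh x = ∑ a, π x a * (Qs x a - Qh x a) := by
    simp only [policyValue, ← sum_sub_distrib, mul_sub]
  rw [hsub, policyValue, ← sum_mul_add_const hπsum]
  exact abs_sum_mul_le_sum_mul hπ hQ

lemma policyValue_le_add_sum_mul_abs_sub (πb : X → A → ℝ) {e : X → A → ℝ}
    (he : ∀ a, 0 ≤ e x a) :
    policyValue π e x ≤ policyValue πb e x + ∑ a, e x a * |π x a - πb x a| := by
  rw [policyValue, policyValue, ← sum_add_distrib]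
  refine sum_le_sum fun a _ => ?_
  nlinarith [le_abs_self (π x a - πb x a), he a]

lemma sum_mul_policyValue_le [Fintype X] {πb e : X → A → ℝ} {p : X → ℝ} {K ε : ℝ}
    (hp : ∀ x, 0 ≤ p x) (hpsum : ∑ x, p x = 1) (he : ∀ x a, 0 ≤ e x a)
    (hsmooth : ∑ x, ∑ a, e x a * πb x a * p x ≤ K)
    (hcon : ∀ x, ∑ a, e x a * |π x a - πb x a| ≤ ε) :
    ∑ x, p x * policyValue π e x ≤ K + ε := by
  have hsplit : ∑ x, p x * (policyValue πb e x + ∑ a, e x a * |π x a - πb x a|) =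
      ∑ x, ∑ a, e x a * πb x a * p x + ∑ x, p x * ∑ a, e x a * |π x a - πb x a| := by
    simp only [mul_add, sum_add_distrib, policyValue, mul_sum]
    congr 1
    exact sum_congr rfl fun _ _ => sum_congr rfl fun _ _ => by ring
  calc ∑ x, p x * policyValue π e x
      ≤ ∑ x, p x * (policyValue πb e x + ∑ a, e x a * |π x a - πb x a|) :=
        sum_le_sum fun x _ => mul_le_mul_of_nonneg_left
          (policyValue_le_add_sum_mul_abs_sub πb (he x)) (hp x)
    _ ≤ K + ε := hsplit ▸ add_le_add hsmooth (sum_mul_le_of_sum_eq_one hp hpsum hcon)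

lemma abs_bellman_sub_le [Fintype X] {R R' : X → A → ℝ} {P P' : X → A → X → ℝ} {γ V : ℝ}
    {Qs Qh : X → A → ℝ} {δ : X → ℝ} {a : A} (hγ : 0 ≤ γ) (hP : ∀ x', 0 ≤ P x a x')
    (hVh : ∀ x', |policyValue π Qh x'| ≤ V)
    (hδ : ∀ x', |policyValue π Qs x' - policyValue π Qh x'| ≤ δ x') :
    |bellman R P γ π Qs x a - bellman R' P' γ π Qh x a| ≤
      |R x a - R' x a| + γ * ((∑ x', |P x a x' - P' x a x'|) * V + ∑ x', P x a x' * δ x') := by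
  have hsum : ∑ x', P x a x' * policyValue π Qs x' - ∑ x', P' x a x' * policyValue π Qh x' =
      ∑ x', (P x a x' - P' x a x') * policyValue π Qh x' +
        ∑ x', P x a x' * (policyValue π Qs x' - policyValue π Qh x') := by
    rw [← sum_add_distrib, ← sum_sub_distrib]
    exact sum_congr rfl fun _ _ => by ring
  have hsplit : bellman R P γ π Qs x a - bellman R' P' γ π Qh x a =
      (R x a - R' x a) + γ * (∑ x', (P x a x' - P' x a x') * policyValue π Qh x' +
        ∑ x', P x a x' * (policyValue π Qs x' - policyValue π Qh x')) := by
    rw [bellman, bellman, ← hsum]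
    ring
  rw [hsplit]
  refine (abs_add_le _ _).trans (add_le_add_right ?_ _)
  rw [abs_mul, abs_of_nonneg hγ]
  exact mul_le_mul_of_nonneg_left ((abs_add_le _ _).trans
    (add_le_add (abs_sum_sub_mul_le hVh) (abs_sum_mul_le_sum_mul hP hδ))) hγ

end Bellman

lemma soft_spibb_bound_fixed_point {γ κ ε e V : ℝ} (hγ : γ < 1) (hκγ : κ * γ < 1) :
    e * ((1 - γ) * V) + γ * (e * V + (V / (1 - κ * γ) * (κ * e + ε)
      + γ * ε / ((1 - γ) * (1 - κ * γ)) * V)) =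
      (e / (1 - κ * γ) + γ * ε / ((1 - γ) * (1 - κ * γ))) * V := by
  have h1 : 1 - γ ≠ 0 := by linarith
  have h2 : 1 - γ * κ ≠ 0 := by linarith
  field_simp
  ring

theorem soft_spibb_induction_step_general
    {X A : Type*} [Fintype X] [Fintype A]
    (Pstar Phat : X → A → X → ℝ) (Rstar Rhat : X → A → ℝ)
    (γ Rmax Vmax κ ε : ℝ) (eP : X → A → ℝ)
    (hγ0 : 0 ≤ γ) (hγ1 : γ < 1)
    (hRV : Rmax ≤ (1 - γ) * Vmax)
    (hκγ : κ * γ < 1)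
    (heP : ∀ x a, 0 ≤ eP x a)
    (hPsnn : ∀ x a x', 0 ≤ Pstar x a x') (hPssum : ∀ x a, ∑ x', Pstar x a x' = 1)
    (hPerr : ∀ x a, ∑ x', |Pstar x a x' - Phat x a x'| ≤ eP x a)
    (hRerr : ∀ x a, |Rstar x a - Rhat x a| ≤ eP x a * Rmax)
    (π πb : X → A → ℝ)
    (hπnn : ∀ x a, 0 ≤ π x a) (hπsum : ∀ x, ∑ a, π x a = 1)
    (hsmooth : ∀ x a, ∑ x', ∑ a', eP x' a' * πb x' a' * Pstar x a x' ≤ κ * eP x a)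
    (hcon : ∀ x, ∑ a, eP x a * |π x a - πb x a| ≤ ε)
    (Qs Qh : X → A → ℝ)
    (hQhB : ∀ x a, |Qh x a| ≤ Vmax)
    (hind : ∀ x a, |Qs x a - Qh x a| ≤
      (eP x a / (1 - κ * γ) + γ * ε / ((1 - γ) * (1 - κ * γ))) * Vmax) :
    ∀ x a,
      |(Rstar x a + γ * ∑ x', Pstar x a x' * ∑ a', π x' a' * Qs x' a')
        - (Rhat x a + γ * ∑ x', Phat x a x' * ∑ a', π x' a' * Qh x' a')| ≤
      (eP x a / (1 - κ * γ) + γ * ε / ((1 - γ) * (1 - κ * γ))) * Vmax := by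
  intro x a
  set D := γ * ε / ((1 - γ) * (1 - κ * γ))
  have hV : 0 ≤ Vmax := (abs_nonneg _).trans (hQhB x a)
  have hind' : ∀ x' a', |Qs x' a' - Qh x' a'| ≤ Vmax / (1 - κ * γ) * eP x' a' + D * Vmax :=
    fun x' a' => (hind x' a').trans_eq (by ring)
  have hpropagate : ∑ x', Pstar x a x' * (Vmax / (1 - κ * γ) * policyValue π eP x' + D * Vmax) ≤
      Vmax / (1 - κ * γ) * (κ * eP x a + ε) + D * Vmax := by
    rw [sum_mul_add_const (hPssum x a)]
    gcongr
    exact sum_mul_policyValue_le (hPsnn x a) (hPssum x a) heP (hsmooth x a) hcon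
  calc _ ≤ _ := abs_bellman_sub_le (R := Rstar) (R' := Rhat) (P' := Phat) hγ0 (hPsnn x a)
          (fun x' => abs_policyValue_le (hπnn x') (hπsum x') (hQhB x'))
          (fun x' => abs_policyValue_sub_le (hπnn x') (hπsum x') (hind' x'))
    _ ≤ eP x a * ((1 - γ) * Vmax) + γ * (eP x a * Vmax +
          (Vmax / (1 - κ * γ) * (κ * eP x a + ε) + D * Vmax)) := by
      gcongr
      · exact (hRerr x a).trans (mul_le_mul_of_nonneg_left hRV (heP x a))
      · exact hPerr x a
    _ = (eP x a / (1 - κ * γ) + D) * Vmax := soft_spibb_bound_fixed_point hγ1 hκγ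

/-- Single Bellman induction step in the proof of Soft-SPIBB's Lemma 1: if the
bound holds for `(Q*_t, Q̂_t)`, it holds after applying the respective Bellman
operators for `π` in `M*` and `M̂`. -/
theorem soft_spibb_induction_step
    {X A : Type*} [Fintype X] [Fintype A]
    (Pstar Phat : X → A → X → ℝ) (Rstar Rhat : X → A → ℝ)
    (γ Rmax Vmax κ ε : ℝ) (eP : X → A → ℝ)
    (hγ0 : 0 ≤ γ) (hγ1 : γ < 1)
    (hRmax : 0 ≤ Rmax) (hRV : Rmax ≤ (1 - γ) * Vmax)
    (hκ0 : 0 ≤ κ) (hκγ : κ * γ < 1) (hε : 0 ≤ ε)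
    (heP : ∀ x a, 0 ≤ eP x a)
    (hPsnn : ∀ x a x', 0 ≤ Pstar x a x') (hPssum : ∀ x a, ∑ x', Pstar x a x' = 1)
    (hPhnn : ∀ x a x', 0 ≤ Phat x a x') (hPhsum : ∀ x a, ∑ x', Phat x a x' = 1)
    (hPerr : ∀ x a, ∑ x', |Pstar x a x' - Phat x a x'| ≤ eP x a)
    (hRerr : ∀ x a, |Rstar x a - Rhat x a| ≤ eP x a * Rmax)
    (π πb : X → A → ℝ)
    (hπnn : ∀ x a, 0 ≤ π x a) (hπsum : ∀ x, ∑ a, π x a = 1)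
    (hπbnn : ∀ x a, 0 ≤ πb x a) (hπbsum : ∀ x, ∑ a, πb x a = 1)
    (hsmooth : ∀ x a, ∑ x', ∑ a', eP x' a' * πb x' a' * Pstar x a x' ≤ κ * eP x a)
    (hcon : ∀ x, ∑ a, eP x a * |π x a - πb x a| ≤ ε)
    (Qs Qh : X → A → ℝ)
    (hQhB : ∀ x a, |Qh x a| ≤ Vmax)
    (hind : ∀ x a, |Qs x a - Qh x a| ≤
      (eP x a / (1 - κ * γ) + γ * ε / ((1 - γ) * (1 - κ * γ))) * Vmax) :
    ∀ x a,
      |(Rstar x a + γ * ∑ x', Pstar x a x' * ∑ a', π x' a' * Qs x' a')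
        - (Rhat x a + γ * ∑ x', Phat x a x' * ∑ a', π x' a' * Qh x' a')| ≤
      (eP x a / (1 - κ * γ) + γ * ε / ((1 - γ) * (1 - κ * γ))) * Vmax :=
  soft_spibb_induction_step_general Pstar Phat Rstar Rhat γ Rmax Vmax κ ε eP hγ0 hγ1 hRV hκγ heP
    hPsnn hPssum hPerr hRerr π πb hπnn hπsum hsmooth hcon Qs Qh hQhB hind
end

section
/- Policy improvement theorem for advantageous policies: let M be a finite MDP, π_b a policy, and π a policy that is π_b-advantageous in M, i.e., Σ_a A^{π_b}_M(x,a)π(a|x) ≥ 0 for every state x, where A^{π_b}_M(x,a) = Q^{π_b}_M(x,a) − V^{π_b}_M(x). Then π is a policy improvement over π_b: V^π_M(x) ≥ V^{π_b}_M(x) for every state x. -/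
/-- Policy improvement theorem for advantageous policies: if `π` is
`π_b`-advantageous in `M`, then `V^π ≥ V^{π_b}` in every state. -/
theorem spibb_policy_improvement
    {X A : Type*} [Fintype X] [Fintype A]
    (P : X → A → X → ℝ) (R : X → A → ℝ) (γ : ℝ)
    (hγ0 : 0 ≤ γ) (hγ1 : γ < 1)
    (hPnn : ∀ x a x', 0 ≤ P x a x') (hPsum : ∀ x a, ∑ x', P x a x' = 1)
    (π πb : X → A → ℝ)
    (hπnn : ∀ x a, 0 ≤ π x a) (hπsum : ∀ x, ∑ a, π x a = 1)
    (hπbnn : ∀ x a, 0 ≤ πb x a) (hπbsum : ∀ x, ∑ a, πb x a = 1)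
    (Qπ Qb : X → A → ℝ) (Vπ Vb : X → ℝ)
    (hVπ : ∀ x, Vπ x = ∑ a, π x a * Qπ x a)
    (hQπ : ∀ x a, Qπ x a = R x a + γ * ∑ x', P x a x' * Vπ x')
    (hVb : ∀ x, Vb x = ∑ a, πb x a * Qb x a)
    (hQb : ∀ x a, Qb x a = R x a + γ * ∑ x', P x a x' * Vb x')
    (hadv : ∀ x, 0 ≤ ∑ a, (Qb x a - Vb x) * π x a) :
    ∀ x, Vb x ≤ Vπ x := by
  -- difference function
  set D : X → ℝ := fun x => Vπ x - Vb x with hD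
  have key : ∀ x, D x = (∑ a, (Qb x a - Vb x) * π x a)
      + γ * ∑ a, π x a * ∑ x', P x a x' * D x' := by
    intro x
    have h1 : ∀ a, Qπ x a = Qb x a + γ * ∑ x', P x a x' * D x' := by
      intro a
      rw [hQπ, hQb]
      simp only [hD, mul_sub, Finset.sum_sub_distrib]
      ring
    have hs : ∑ a, (Qb x a - Vb x) * π x a
        = (∑ a, π x a * Qb x a) - Vb x := by
      have hv : ∑ a, Vb x * π x a = Vb x := by
        rw [← Finset.mul_sum, hπsum x, mul_one]
      simp only [sub_mul, Finset.sum_sub_distrib, hv]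
      congr 1
      exact Finset.sum_congr rfl fun a _ => mul_comm _ _
    have hp : ∀ a x', π x a * (γ * (P x a x' * D x'))
        = γ * (π x a * (P x a x' * (Vπ x' - Vb x'))) := by
      intro a x'; simp only [hD]; ring
    simp only [hD, hVπ x]
    simp_rw [h1]
    simp only [mul_add, Finset.sum_add_distrib, hs, Finset.mul_sum]
    simp_rw [hp]
    ring
  -- choose a minimizer of D
  by_cases hX : Nonempty X
  · obtain ⟨x0, -, hx0⟩ := Finset.exists_min_image Finset.univ D
      ⟨Classical.arbitrary X, Finset.mem_univ _⟩
    have hx0' : ∀ x, D x0 ≤ D x := fun x => hx0 x (Finset.mem_univ x)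
    have hDx0 : 0 ≤ D x0 := by
      have h2 : γ * D x0 ≤ γ * ∑ a, π x0 a * ∑ x', P x0 a x' * D x' := by
        apply mul_le_mul_of_nonneg_left _ hγ0
        calc D x0 = ∑ a, π x0 a * D x0 := by
              rw [← Finset.sum_mul, hπsum x0, one_mul]
          _ ≤ ∑ a, π x0 a * ∑ x', P x0 a x' * D x' := by
              apply Finset.sum_le_sum
              intro a _
              apply mul_le_mul_of_nonneg_left _ (hπnn x0 a)
              calc D x0 = ∑ x', P x0 a x' * D x0 := by
                    rw [← Finset.sum_mul, hPsum x0 a, one_mul]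
                _ ≤ ∑ x', P x0 a x' * D x' := by
                    apply Finset.sum_le_sum
                    intro x' _
                    exact mul_le_mul_of_nonneg_left (hx0' x') (hPnn x0 a x')
      have h3 : γ * D x0 ≤ D x0 := by
        calc γ * D x0 ≤ γ * ∑ a, π x0 a * ∑ x', P x0 a x' * D x' := h2
          _ ≤ (∑ a, (Qb x0 a - Vb x0) * π x0 a)
              + γ * ∑ a, π x0 a * ∑ x', P x0 a x' * D x' := by
                linarith [hadv x0]
          _ = D x0 := (key x0).symm
      nlinarith
    intro x
    have := le_trans hDx0 (hx0' x)
    simp only [hD] at this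
    linarith
  · intro x; exact absurd ⟨x⟩ hX
end
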